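/- arXiv:2212.03204 — 8 statements merged into one kernel-verified Lean document; each statement's English description precedes it below -/
import Mathlib

section
/- If R is an integral domain, I an ideal with R/I isomorphic to ℤ/4ℤ via f, then any element of R that is congruent modulo I to a preimage of 2 cannot be written as a product of two nonunits of R that are congruent to each other modulo I. -/
/-- If `R` is a domain, `I` an ideal with `R/I ≅ ℤ/4ℤ` via `f`, then any element of `R`
mapping to `2` cannot be written as a product of two nonunits of `R` that are congruent
to each other modulo `I`. -/
theorem stmt_7 {R : Type*} [CommRing R] [IsDomain R] (I : Ideal R)
    (f : (R ⧸ I) ≃+* ZMod 4) (a : R) (ha : f (Ideal.Quotient.mk I a) = 2) :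
    ¬ ∃ b c : R, ¬ IsUnit b ∧ ¬ IsUnit c ∧
      Ideal.Quotient.mk I b = Ideal.Quotient.mk I c ∧ a = b * c := by
  rintro ⟨b, c, _, _, hbc, rfl⟩
  rw [map_mul, map_mul, ← hbc] at ha
  have h : ∀ x : ZMod 4, x * x ≠ 2 := by decide
  exact h _ ha
end

section
/- Let R be a UFD and I an ideal with R/I ≅ ℤ/4ℤ via f. If a ∈ R has prime factorization a = p₁⋯p_k q₁⋯q_l r₁⋯r_m s₁⋯s_n with p_i ≡ f⁻¹(1), q_i ≡ f⁻¹(2), r_i ≡ f⁻¹(3), s_i ≡ f⁻¹(0) (mod I), n ≥ 1, and a ≡ 0 (mod I), then every τ_I-factorization of a into τ_I-atoms has length exactly n. -/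
open Polynomial
open scoped ENNReal

variable {R : Type*} [CommRing R]

/-- `a = λ b₁ ⋯ b_k` with `λ` a unit, `k ≥ 1`, and all `bᵢ` pairwise congruent mod `I`. -/
def IsTauFactorization (I : Ideal R) (a : R) (L : List R) : Prop :=
  L ≠ [] ∧ (∃ u : R, IsUnit u ∧ a = u * L.prod) ∧
    ∀ b ∈ L, ∀ c ∈ L, Ideal.Quotient.mk I b = Ideal.Quotient.mk I c

/-- A `τ_I`-atom: a nonzero nonunit whose only `τ_I`-factorizations have length one. -/
def IsTauAtom (I : Ideal R) (a : R) : Prop :=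
  a ≠ 0 ∧ ¬ IsUnit a ∧ ∀ L : List R, IsTauFactorization I a L → L.length = 1

/-- A `τ_I`-factorization into `τ_I`-atoms. -/
def IsTauAtomicFactorization (I : Ideal R) (a : R) (L : List R) : Prop :=
  IsTauFactorization I a L ∧ ∀ b ∈ L, IsTauAtom I b

/-- An element is `τ_I`-atomic if it has a `τ_I`-factorization into `τ_I`-atoms. -/
def IsTauAtomic (I : Ideal R) (a : R) : Prop :=
  ∃ L : List R, IsTauAtomicFactorization I a L

/-- The `τ_I`-elasticity of an element: `sup{k/l}` over pairs of atomic `τ_I`-factorizations. -/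
noncomputable def tauElasticity (I : Ideal R) (a : R) : ℝ≥0∞ :=
  sSup {r : ℝ≥0∞ | ∃ L₁ L₂ : List R, IsTauAtomicFactorization I a L₁ ∧
    IsTauAtomicFactorization I a L₂ ∧
    r = (L₁.length : ℝ≥0∞) / (L₂.length : ℝ≥0∞)}

/-- The `τ_I`-elasticity of the ring: the supremum over `τ_I`-atomic elements. -/
noncomputable def tauRingElasticity (I : Ideal R) : ℝ≥0∞ :=
  ⨆ a ∈ {a : R | IsTauAtomic I a}, tauElasticity I a

/-!
Let `σ(x)` be the number of prime factors of `x` lying in `I`, counted with multiplicity; `σ` is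
additive, and the given factorization shows `σ(a) = n`. All factors of a τ_I-factorization
`a = λ b₁ ⋯ b_k` lie in one class mod `I`. If it is not `0`, no `bᵢ` has a prime factor in `I`, so
`σ(a) = 0 < n`. Otherwise it suffices that `σ(b) = 1` for every τ_I-atom `b ∈ I`.

If `b = v t₁ ⋯ t_j` with all `tᵢ ≡ c` and `v c ≡ c`, then `(v t₁), t₂, …, t_j` is a
τ_I-factorization of `b`, so `j ≤ 1`. Taking for the `tᵢ` the prime factors of `b` in `I` (`c = 0`)
gives `σ(b) ≤ 1`. If `σ(b) = 0`, the prime factors of `b` have classes `1, 2, 3`; take for the `tᵢ`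
those of class `2`, so that `v` is a unit mod `I` and `v · 2 = 2` in `ℤ/4ℤ`. Then `b ≡ 0` forces
`j ≥ 2`, a contradiction.
-/

open UniqueFactorizationMonoid

theorem Multiset.Rel.countP_eq_countP {α β : Type*} {r : α → β → Prop} {p : α → Prop}
    {q : β → Prop} [DecidablePred p] [DecidablePred q] (hpq : ∀ a b, r a b → (p a ↔ q b))
    {s : Multiset α} {t : Multiset β} (h : Multiset.Rel r s t) : s.countP p = t.countP q := by
  induction h with
  | zero => rfl
  | cons hab _ ih =>
    rw [Multiset.countP_cons, Multiset.countP_cons, ih, if_congr (hpq _ _ hab) rfl rfl]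

theorem isTauFactorization_of_forall_mk_eq {I : Ideal R} {a u : R} {L : List R} (c : R ⧸ I)
    (hL : L ≠ []) (hu : IsUnit u) (ha : a = u * L.prod) (hc : ∀ b ∈ L, Ideal.Quotient.mk I b = c) :
    IsTauFactorization I a L :=
  ⟨hL, ⟨u, hu, ha⟩, fun b hb b' hb' => (hc b hb).trans (hc b' hb').symm⟩

theorem IsTauAtom.card_le_one_of_eq_mul_prod {I : Ideal R} {b v : R} {T : Multiset R}
    {c : R ⧸ I} (hb : IsTauAtom I b) (hbT : b = v * T.prod)
    (hT : ∀ t ∈ T, Ideal.Quotient.mk I t = c) (hv : Ideal.Quotient.mk I v * c = c) :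
    Multiset.card T ≤ 1 := by
  by_contra! h
  obtain ⟨t, ht⟩ := Multiset.card_pos_iff_exists_mem.mp (zero_lt_one.trans h)
  obtain ⟨T', rfl⟩ := Multiset.exists_cons_of_mem ht
  have hfac : IsTauFactorization I b (v * t :: T'.toList) := by
    refine isTauFactorization_of_forall_mk_eq c (List.cons_ne_nil _ _) isUnit_one ?_ ?_
    · rw [one_mul, List.prod_cons, Multiset.prod_toList, mul_assoc, ← Multiset.prod_cons, hbT]
    · simp only [List.forall_mem_cons, Multiset.mem_toList]
      refine ⟨?_, fun x hx => hT x (Multiset.mem_cons_of_mem hx)⟩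
      rw [map_mul, hT t ht, hv]
  have hT' : T' = 0 := by simpa using hb.2.2 _ hfac
  simp [hT'] at h

theorem zmod4_isUnit_of_ne_zero_of_ne_two {x : ZMod 4} (h0 : x ≠ 0) (h2 : x ≠ 2) : IsUnit x := by
  revert x; decide

theorem zmod4_isUnit_mul_two {x : ZMod 4} (hx : IsUnit x) : x * 2 = 2 := by
  revert x; decide

theorem zmod4_two_le_of_isUnit_mul_two_pow_eq_zero {x : ZMod 4} (hx : IsUnit x) {k : ℕ}
    (h : x * 2 ^ k = 0) : 2 ≤ k := by
  by_contra! hk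
  interval_cases k <;> revert x <;> decide

section CardFactorsIn

open Classical

variable [UniqueFactorizationMonoid R] {I : Ideal R}

noncomputable def cardFactorsIn (I : Ideal R) (x : R) : ℕ :=
  (factors x).countP (· ∈ I)

theorem cardFactorsIn_eq_countP_of_rel {x : R} {s : Multiset R}
    (h : Multiset.Rel Associated (factors x) s) : cardFactorsIn I x = s.countP (· ∈ I) :=
  h.countP_eq_countP fun _ _ hab => Ideal.mem_iff_of_associated hab

theorem Associated.cardFactorsIn_eq {x y : R} (h : Associated x y) :
    cardFactorsIn I x = cardFactorsIn I y :=
  cardFactorsIn_eq_countP_of_rel (factors_rel_of_associated h)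

theorem cardFactorsIn_mul {x y : R} (hx : x ≠ 0) (hy : y ≠ 0) :
    cardFactorsIn I (x * y) = cardFactorsIn I x + cardFactorsIn I y := by
  rw [cardFactorsIn_eq_countP_of_rel (factors_mul hx hy), Multiset.countP_add]
  rfl

theorem cardFactorsIn_list_prod [IsDomain R] {L : List R} (hL : ∀ x ∈ L, x ≠ 0) :
    cardFactorsIn I L.prod = (L.map (cardFactorsIn I)).sum := by
  induction L with
  | nil => simp [cardFactorsIn, factors_one]
  | cons x L ih =>
    simp only [List.forall_mem_cons] at hL
    rw [List.prod_cons, cardFactorsIn_mul hL.1 (List.prod_ne_zero fun h => hL.2 0 h rfl),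
      ih hL.2, List.map_cons, List.sum_cons]

theorem cardFactorsIn_prod_of_prime [IsDomain R] {L : List R} (hL : ∀ p ∈ L, Prime p) :
    cardFactorsIn I L.prod = L.countP (· ∈ I) := by
  have hL' : ∀ p ∈ (L : Multiset R), Prime p := hL
  rw [cardFactorsIn_eq_countP_of_rel (s := L), Multiset.coe_countP]
  refine prime_factors_unique prime_of_factor hL' ?_
  rw [Multiset.prod_coe]
  exact factors_prod (List.prod_ne_zero fun h => (hL 0 h).ne_zero rfl)

theorem cardFactorsIn_eq_zero_of_notMem {x : R} (hx : x ∉ I) : cardFactorsIn I x = 0 :=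
  Multiset.countP_eq_zero.mpr fun _ hp hpI => hx (I.mem_of_dvd (dvd_of_mem_factors hp) hpI)

theorem exists_eq_prod_filter_not_mul_prod_filter (p : R → Prop) [DecidablePred p] {b : R}
    (hb : b ≠ 0) :
    ∃ u : Rˣ, b = ((factors b).filter (¬ p ·)).prod * u * ((factors b).filter p).prod := by
  obtain ⟨u, hu⟩ := factors_prod hb
  refine ⟨u, ?_⟩
  conv_lhs => rw [← hu, ← Multiset.filter_add_not p (factors b), Multiset.prod_add]
  ring

theorem IsTauAtom.cardFactorsIn_le_one {b : R} (hb : IsTauAtom I b) : cardFactorsIn I b ≤ 1 := by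
  obtain ⟨u, hu⟩ := exists_eq_prod_filter_not_mul_prod_filter (· ∈ I) hb.1
  rw [cardFactorsIn, Multiset.countP_eq_card_filter]
  exact hb.card_le_one_of_eq_mul_prod hu
    (fun t ht => Ideal.Quotient.eq_zero_iff_mem.mpr (Multiset.mem_filter.mp ht).2) (mul_zero _)

theorem IsTauAtom.cardFactorsIn_pos (f : (R ⧸ I) ≃+* ZMod 4) {b : R} (hb : IsTauAtom I b)
    (hbI : b ∈ I) : 0 < cardFactorsIn I b := by
  set g : R →+* ZMod 4 := f.toRingHom.comp (Ideal.Quotient.mk I)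
  have hg : ∀ x, g x = 0 ↔ x ∈ I := fun x => by
    simp [g, Ideal.Quotient.eq_zero_iff_mem]
  have hmk : ∀ x, Ideal.Quotient.mk I x = f.symm 2 ↔ g x = 2 := fun _ => f.eq_symm_apply
  by_contra! h0
  have hF : ∀ p ∈ factors b, p ∉ I := Multiset.countP_eq_zero.mp (Nat.le_zero.mp h0)
  obtain ⟨u, hu⟩ := exists_eq_prod_filter_not_mul_prod_filter (g · = 2) hb.1
  set T := (factors b).filter (g · = 2)
  set v := ((factors b).filter (¬ g · = 2)).prod * u
  have hv : IsUnit (g v) := by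
    rw [map_mul, map_multiset_prod]
    refine (Multiset.prod_induction IsUnit _ (fun _ _ => IsUnit.mul) isUnit_one ?_).mul
      (u.isUnit.map g)
    intro _ hx
    obtain ⟨p, hp, rfl⟩ := Multiset.mem_map.mp hx
    obtain ⟨hp, hp2⟩ := Multiset.mem_filter.mp hp
    exact zmod4_isUnit_of_ne_zero_of_ne_two ((hg p).not.mpr (hF p hp)) hp2
  have hT : ∀ t ∈ T, g t = 2 := fun t ht => (Multiset.mem_filter.mp ht).2
  have hcard : 2 ≤ Multiset.card T := by
    refine zmod4_two_le_of_isUnit_mul_two_pow_eq_zero hv ?_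
    rw [← Multiset.prod_replicate, ← Multiset.map_const', ← Multiset.map_congr rfl hT,
      ← map_multiset_prod, ← map_mul, ← hu, hg]
    exact hbI
  have := hb.card_le_one_of_eq_mul_prod (c := f.symm 2) hu (fun t ht => (hmk t).mpr (hT t ht))
    (f.injective <| by rw [map_mul, f.apply_symm_apply]; exact zmod4_isUnit_mul_two hv)
  omega

theorem IsTauAtom.cardFactorsIn_eq_one (f : (R ⧸ I) ≃+* ZMod 4) {b : R} (hb : IsTauAtom I b)
    (hbI : b ∈ I) : cardFactorsIn I b = 1 :=
  le_antisymm hb.cardFactorsIn_le_one (hb.cardFactorsIn_pos f hbI)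

end CardFactorsIn

theorem stmt_9_general {R : Type*} [CommRing R] [IsDomain R] [UniqueFactorizationMonoid R]
    (I : Ideal R) (f : (R ⧸ I) ≃+* ZMod 4) (a : R) (P Q M S : List R)
    (hP : ∀ p ∈ P, Prime p ∧ f (Ideal.Quotient.mk I p) = 1)
    (hQ : ∀ q ∈ Q, Prime q ∧ f (Ideal.Quotient.mk I q) = 2)
    (hM : ∀ r ∈ M, Prime r ∧ f (Ideal.Quotient.mk I r) = 3)
    (hS : ∀ s ∈ S, Prime s ∧ f (Ideal.Quotient.mk I s) = 0)
    (ha : a = P.prod * Q.prod * M.prod * S.prod)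
    (hn : 1 ≤ S.length) :
    ∀ L : List R, IsTauAtomicFactorization I a L → L.length = S.length := by
  have hI : ∀ x, x ∈ I ↔ f (Ideal.Quotient.mk I x) = 0 := fun x => by
    simp [Ideal.Quotient.eq_zero_iff_mem]
  have hcount : cardFactorsIn I a = S.length := by
    have hprime : ∀ p ∈ P ++ Q ++ M ++ S, Prime p := by
      simp only [List.mem_append]
      rintro p (((hp | hp) | hp) | hp)
      exacts [(hP p hp).1, (hQ p hp).1, (hM p hp).1, (hS p hp).1]
    rw [ha, ← List.prod_append, ← List.prod_append, ← List.prod_append,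
      cardFactorsIn_prod_of_prime hprime, List.countP_append, List.countP_append,
      List.countP_append, List.countP_eq_zero.mpr, List.countP_eq_zero.mpr,
      List.countP_eq_zero.mpr, List.countP_eq_length.mpr, zero_add, zero_add, zero_add]
    exacts [fun p hp => by simp [hI, (hS p hp).2], fun p hp => by simp [hI, (hM p hp).2]; decide,
      fun p hp => by simp [hI, (hQ p hp).2]; decide, fun p hp => by simp [hI, (hP p hp).2]; decide]
  rintro L ⟨⟨hL, ⟨u, hu, rfl⟩, hcong⟩, hatoms⟩
  have hsum : cardFactorsIn I (u * L.prod) = (L.map (cardFactorsIn I)).sum := by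
    rw [(associated_unit_mul_left _ u hu).cardFactorsIn_eq,
      cardFactorsIn_list_prod fun b hb => (hatoms b hb).1]
  obtain ⟨b₀, hb₀⟩ := List.exists_mem_of_ne_nil L hL
  have hmem : ∀ b ∈ L, b ∈ I ↔ b₀ ∈ I := fun b hb => by
    rw [← Ideal.Quotient.eq_zero_iff_mem, hcong b hb b₀ hb₀, Ideal.Quotient.eq_zero_iff_mem]
  by_cases hb₀I : b₀ ∈ I
  · rw [← hcount, hsum, List.map_congr_left fun b hb =>
      (hatoms b hb).cardFactorsIn_eq_one f ((hmem b hb).mpr hb₀I), List.map_const',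
      List.sum_replicate, smul_eq_mul, mul_one]
  · have hzero : cardFactorsIn I (u * L.prod) = 0 := by
      rw [hsum, List.sum_eq_zero]
      simp only [List.mem_map]
      rintro _ ⟨b, hb, rfl⟩
      exact cardFactorsIn_eq_zero_of_notMem (hb₀I ∘ (hmem b hb).mp)
    omega

/-- UFD `R`, `R/I ≅ ℤ/4ℤ` via `f`: if `a` is a product of primes with the indicated
congruence classes, at least one prime lies in `I`, and `a ∈ I`, then every
`τ_I`-factorization of `a` into `τ_I`-atoms has length exactly `n = S.length`. -/
theorem stmt_9 {R : Type*} [CommRing R] [IsDomain R] [UniqueFactorizationMonoid R]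
    (I : Ideal R) (f : (R ⧸ I) ≃+* ZMod 4) (a : R) (P Q M S : List R)
    (hP : ∀ p ∈ P, Prime p ∧ f (Ideal.Quotient.mk I p) = 1)
    (hQ : ∀ q ∈ Q, Prime q ∧ f (Ideal.Quotient.mk I q) = 2)
    (hM : ∀ r ∈ M, Prime r ∧ f (Ideal.Quotient.mk I r) = 3)
    (hS : ∀ s ∈ S, Prime s ∧ f (Ideal.Quotient.mk I s) = 0)
    (ha : a = P.prod * Q.prod * M.prod * S.prod)
    (hn : 1 ≤ S.length) (haI : a ∈ I) :
    ∀ L : List R, IsTauAtomicFactorization I a L → L.length = S.length :=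
  stmt_9_general I f a P Q M S hP hQ hM hS ha hn
end

section
/- Let R be a UFD and I an ideal with R/I ≅ ℤ/4ℤ. Then every τ_I-atomic element a ∈ R has τ_I-elasticity ρ_I(a) = 1; i.e., all τ_I-factorizations of a into τ_I-atoms have the same length. -/
/-!
Let `χ : R → ZMod 4` be reduction mod `I`, and count the prime factors of an element by their
class. An atom `b` has class `0` or `2`: if `χ b = ±1` then `b = ε * (ε * b)` with `ε = ±1` is a
factorization of length two. An element of class `2` has exactly one prime factor of class `2`
and none of class `0`. An atom of class `0` has exactly one prime factor of class `0`: with two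
of them, `b = p * (b / p)` splits it; with none, it has at least two prime factors of class `2`,
and grouping the remaining factors with one of them splits it into factors of class `2`.
So an atomic factorization of `a` has as many factors as `a` has prime factors of class `0`,
or, when there are none, of class `2`.
-/

open Polynomial
open scoped ENNReal

variable {R : Type*} [CommRing R]

namespace ZMod

lemma isUnit_four_iff {w : ZMod 4} : IsUnit w ↔ w = 1 ∨ w = 3 := by
  rw [isUnit_iff_exists_inv]
  revert w
  decide

lemma isUnit_four_of_ne_zero_of_ne_two {w : ZMod 4} (h0 : w ≠ 0) (h2 : w ≠ 2) : IsUnit w := by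
  rw [isUnit_four_iff]
  revert w
  decide

lemma two_pow_eq_zero_iff_four {k : ℕ} : (2 : ZMod 4) ^ k = 0 ↔ 2 ≤ k := by
  refine ⟨fun h => ?_, fun h => ?_⟩
  · by_contra! hk
    interval_cases k <;> revert h <;> decide
  · obtain ⟨j, rfl⟩ := Nat.exists_eq_add_of_le h
    rw [pow_add, show (2 : ZMod 4) ^ 2 = 0 by decide, zero_mul]

lemma two_mul_of_isUnit_four {w : ZMod 4} (hw : IsUnit w) : 2 * w = 2 := by
  rcases isUnit_four_iff.mp hw with rfl | rfl <;> decide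

lemma two_pow_mul_eq_two_iff_four {w : ZMod 4} (hw : IsUnit w) {k : ℕ} :
    2 ^ k * w = 2 ↔ k = 1 := by
  refine ⟨fun h => ?_, fun h => by rw [h, pow_one, two_mul_of_isUnit_four hw]⟩
  rcases Nat.lt_or_ge k 2 with hk | hk
  · interval_cases k
    · rw [pow_zero, one_mul] at h
      exact absurd (h ▸ hw) (by rw [isUnit_four_iff]; decide)
    · rfl
  · rw [two_pow_eq_zero_iff_four.mpr hk, zero_mul] at h
    exact absurd h (by decide)

lemma exists_prod_eq_two_pow_count_mul_unit (s : Multiset (ZMod 4)) (hs : (0 : ZMod 4) ∉ s) :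
    ∃ w : ZMod 4, IsUnit w ∧ s.prod = 2 ^ s.count 2 * w := by
  induction s using Multiset.induction with
  | empty => exact ⟨1, isUnit_one, by simp⟩
  | cons a s ih =>
    obtain ⟨w, hw, hprod⟩ := ih (fun h => hs (Multiset.mem_cons_of_mem h))
    rw [Multiset.prod_cons, hprod, Multiset.count_cons]
    by_cases ha : a = 2
    · exact ⟨w, hw, by rw [if_pos ha.symm, ha, pow_succ]; ring⟩
    · have ha0 : a ≠ 0 := fun h => hs (h ▸ Multiset.mem_cons_self a s)
      refine ⟨a * w, (isUnit_four_of_ne_zero_of_ne_two ha0 ha).mul hw, ?_⟩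
      rw [if_neg (Ne.symm ha), add_zero]
      ring

end ZMod

open UniqueFactorizationMonoid

section ClassCount

variable [UniqueFactorizationMonoid R] [NormalizationMonoid R]
  {S : Type*} [CommRing S] [DecidableEq S]

noncomputable def classCount (χ : R →+* S) (c : S) (x : R) : ℕ :=
  ((normalizedFactors x).map χ).count c

variable (χ : R →+* S) (c : S)

lemma classCount_mul {x y : R} (hx : x ≠ 0) (hy : y ≠ 0) :
    classCount χ c (x * y) = classCount χ c x + classCount χ c y := by
  rw [classCount, normalizedFactors_mul hx hy, Multiset.map_add, Multiset.count_add]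
  rfl

lemma classCount_unit_mul [Nontrivial R] {u : R} (hu : IsUnit u) (x : R) :
    classCount χ c (u * x) = classCount χ c x := by
  rcases eq_or_ne x 0 with rfl | hx
  · rw [mul_zero]
  rw [classCount_mul χ c hu.ne_zero hx, classCount, normalizedFactors_of_isUnit hu,
    Multiset.map_zero, Multiset.count_zero, zero_add]

lemma classCount_list_prod [IsDomain R] {L : List R} (hL : (0 : R) ∉ L) :
    classCount χ c L.prod = (L.map (classCount χ c)).sum := by
  induction L with
  | nil => simp [classCount]
  | cons b L ih =>
    rw [List.mem_cons, not_or] at hL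
    rw [List.prod_cons, classCount_mul χ c (Ne.symm hL.1) (List.prod_ne_zero hL.2), ih hL.2,
      List.map_cons, List.sum_cons]

lemma classCount_zero_eq_zero {x : R} (hx : χ x ≠ 0) : classCount χ 0 x = 0 := by
  rw [classCount, Multiset.count_eq_zero, Multiset.mem_map]
  rintro ⟨p, hp, hp0⟩
  exact hx (zero_dvd_iff.mp (hp0 ▸ map_dvd χ (dvd_of_mem_normalizedFactors hp)))

lemma exists_class_eq_two_pow_mul_unit {χ : R →+* ZMod 4} {x : R} (hx : x ≠ 0)
    (h0 : classCount χ 0 x = 0) :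
    ∃ w : ZMod 4, IsUnit w ∧ χ x = 2 ^ classCount χ 2 x * w := by
  obtain ⟨u, hu⟩ := prod_normalizedFactors hx
  obtain ⟨w, hw, hprod⟩ := ZMod.exists_prod_eq_two_pow_count_mul_unit
    ((normalizedFactors x).map χ) (Multiset.count_eq_zero.mp h0)
  refine ⟨w * χ u, hw.mul (u.isUnit.map χ), ?_⟩
  conv_lhs => rw [← hu]
  rw [map_mul, map_multiset_prod, hprod, mul_assoc]
  rfl

lemma classCount_two_eq_one {χ : R →+* ZMod 4} {x : R} (hx : χ x = 2) :
    classCount χ 2 x = 1 := by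
  have hx0 : x ≠ 0 := by rintro rfl; exact absurd hx (by rw [map_zero]; decide)
  obtain ⟨w, hw, hχx⟩ := exists_class_eq_two_pow_mul_unit hx0
    (classCount_zero_eq_zero χ (by rw [hx]; decide))
  exact (ZMod.two_pow_mul_eq_two_iff_four hw).mp (hχx ▸ hx)

end ClassCount

lemma IsTauFactorization.length_ne_zero {I : Ideal R} {a : R} {L : List R}
    (h : IsTauFactorization I a L) : L.length ≠ 0 :=
  fun h0 => h.1 (List.length_eq_zero_iff.mp h0)

section TauFactorization

variable {I : Ideal R} {S : Type*} [CommRing S] {χ : R →+* S}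

lemma Ideal.Quotient.mk_eq_mk_iff_of_ker_eq (hχ : RingHom.ker χ = I) {x y : R} :
    Ideal.Quotient.mk I x = Ideal.Quotient.mk I y ↔ χ x = χ y := by
  rw [Ideal.Quotient.eq, ← hχ, RingHom.mem_ker, map_sub, sub_eq_zero]

lemma isTauFactorization_of_forall_eq (hχ : RingHom.ker χ = I) {a u : R} {c : S} {L : List R}
    (hL : L ≠ []) (hu : IsUnit u) (ha : a = u * L.prod) (hc : ∀ b ∈ L, χ b = c) :
    IsTauFactorization I a L :=
  ⟨hL, ⟨u, hu, ha⟩, fun b hb b' hb' =>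
    (Ideal.Quotient.mk_eq_mk_iff_of_ker_eq hχ).mpr ((hc b hb).trans (hc b' hb').symm)⟩

lemma IsTauAtom.class_eq_zero_or_eq_two {χ : R →+* ZMod 4} (hχ : RingHom.ker χ = I) {b : R}
    (hb : IsTauAtom I b) : χ b = 0 ∨ χ b = 2 := by
  by_contra! h
  obtain ⟨ε, hε, hεb⟩ : ∃ ε : R, ε * ε = 1 ∧ χ ε = χ b := by
    rcases ZMod.isUnit_four_iff.mp (ZMod.isUnit_four_of_ne_zero_of_ne_two h.1 h.2) with h1 | h3
    · exact ⟨1, one_mul 1, by rw [map_one, h1]⟩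
    · exact ⟨-1, by ring, by rw [map_neg, map_one, h3]; decide⟩
  have hfac : IsTauFactorization I b [ε, b] :=
    isTauFactorization_of_forall_eq hχ (List.cons_ne_nil _ _) (IsUnit.of_mul_eq_one ε hε)
      (by rw [List.prod_pair, ← mul_assoc, hε, one_mul]) (c := χ b) (by simp [hεb])
  exact absurd (hb.2.2 _ hfac) (by simp)

variable [UniqueFactorizationMonoid R] [NormalizationMonoid R] [DecidableEq S]

lemma exists_isTauFactorization_pair_of_two_le_classCount_zero [IsDomain R]
    (hχ : RingHom.ker χ = I) {b : R} (hb : b ≠ 0) (h : 2 ≤ classCount χ 0 b) :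
    ∃ x y : R, IsTauFactorization I b [x, y] := by
  classical
  obtain ⟨u, hu⟩ := prod_normalizedFactors hb
  have hpos : 0 < ((normalizedFactors b).map χ).count 0 := by unfold classCount at h; omega
  obtain ⟨p, hp, hp0⟩ := Multiset.mem_map.mp (Multiset.count_pos.mp hpos)
  set M := (normalizedFactors b).erase p
  have hM : p ::ₘ M = normalizedFactors b := Multiset.cons_erase hp
  have hM0 : 0 < (M.map χ).count 0 := by
    rw [classCount, ← hM, Multiset.map_cons, hp0, Multiset.count_cons_self] at h
    omega
  have hrest : χ (M.prod * u) = 0 := by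
    rw [map_mul, map_multiset_prod, Multiset.prod_eq_zero (Multiset.count_pos.mp hM0), zero_mul]
  refine ⟨p, M.prod * u, isTauFactorization_of_forall_eq hχ (List.cons_ne_nil _ _) isUnit_one
    ?_ (c := 0) (by simp [hp0, hrest])⟩
  rw [one_mul, List.prod_pair, ← mul_assoc, ← Multiset.prod_cons, hM, hu]

lemma exists_isTauFactorization_length_classCount_two [IsDomain R] {χ : R →+* ZMod 4}
    (hχ : RingHom.ker χ = I) {b : R} (hb : b ≠ 0) (h0 : classCount χ 0 b = 0)
    (h2 : classCount χ 2 b ≠ 0) :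
    ∃ L : List R, IsTauFactorization I b L ∧ L.length = classCount χ 2 b := by
  classical
  obtain ⟨u, hu⟩ := prod_normalizedFactors hb
  set T := (normalizedFactors b).filter (χ · = 2)
  set N := (normalizedFactors b).filter (¬ χ · = 2)
  have hTN : T + N = normalizedFactors b := Multiset.filter_add_not _ _
  have hT : Multiset.card T = classCount χ 2 b := by
    simp only [T, classCount, Multiset.count_map, eq_comm]
  obtain ⟨p, hp⟩ := Multiset.card_pos_iff_exists_mem.mp (Nat.pos_of_ne_zero (hT ▸ h2))
  obtain ⟨w, hw, hN⟩ := ZMod.exists_prod_eq_two_pow_count_mul_unit (N.map χ)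
    (fun h => Multiset.count_eq_zero.mp h0
      (Multiset.map_subset_map (Multiset.filter_subset _ _) h))
  have hN2 : (N.map χ).count 2 = 0 := by
    simp [N, eq_comm]
  -- the factors of class `1` and `3` and the unit are absorbed into one class-`2` factor
  refine ⟨(p * N.prod * u) :: (T.erase p).toList,
    isTauFactorization_of_forall_eq hχ (List.cons_ne_nil _ _) isUnit_one ?_ (c := 2) ?_, ?_⟩
  · rw [one_mul, List.prod_cons, Multiset.prod_toList, ← hu, ← hTN, Multiset.prod_add,
      ← Multiset.prod_erase hp]
    ring
  · intro x hx
    rcases List.mem_cons.mp hx with rfl | hx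
    · rw [map_mul, map_mul, map_multiset_prod, hN, hN2, pow_zero, one_mul,
        (Multiset.mem_filter.mp hp).2, mul_assoc,
        ZMod.two_mul_of_isUnit_four (hw.mul (u.isUnit.map χ))]
    · exact (Multiset.mem_filter.mp (Multiset.mem_of_mem_erase (Multiset.mem_toList.mp hx))).2
  · rw [List.length_cons, Multiset.length_toList, ← hT, Multiset.card_erase_add_one hp]

lemma IsTauAtom.classCount_zero_eq_one [IsDomain R] {χ : R →+* ZMod 4}
    (hχ : RingHom.ker χ = I) {b : R} (hb : IsTauAtom I b) (hb0 : χ b = 0) :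
    classCount χ 0 b = 1 := by
  rcases Nat.lt_trichotomy (classCount χ 0 b) 1 with h | h | h
  · have h0 : classCount χ 0 b = 0 := by omega
    obtain ⟨w, hw, hχb⟩ := exists_class_eq_two_pow_mul_unit hb.1 h0
    have h2 : 2 ≤ classCount χ 2 b :=
      ZMod.two_pow_eq_zero_iff_four.mp (hw.mul_left_eq_zero.mp (hχb ▸ hb0))
    obtain ⟨L, hL, hlen⟩ :=
      exists_isTauFactorization_length_classCount_two hχ hb.1 h0 (by omega)
    have := hb.2.2 L hL
    omega
  · exact h
  · obtain ⟨x, y, hxy⟩ := exists_isTauFactorization_pair_of_two_le_classCount_zero hχ hb.1 h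
    exact absurd (hb.2.2 _ hxy) (by simp)

end TauFactorization

lemma List.sum_map_eq_length {α : Type*} {g : α → ℕ} {L : List α} (hg : ∀ b ∈ L, g b = 1) :
    (L.map g).sum = L.length := by
  rw [List.map_congr_left hg, List.map_const', List.sum_replicate, smul_eq_mul, mul_one]

lemma IsTauAtomicFactorization.length_eq [IsDomain R] [UniqueFactorizationMonoid R]
    [NormalizationMonoid R] {I : Ideal R} {χ : R →+* ZMod 4} (hχ : RingHom.ker χ = I) {a : R}
    {L : List R} (hL : IsTauAtomicFactorization I a L) :
    L.length = if classCount χ 0 a = 0 then classCount χ 2 a else classCount χ 0 a := by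
  have hlen := hL.1.length_ne_zero
  obtain ⟨⟨hne, ⟨u, hu, rfl⟩, hcong⟩, hatoms⟩ := hL
  obtain ⟨b₀, hb₀⟩ := List.exists_mem_of_ne_nil L hne
  have hcls : ∀ b ∈ L, χ b = χ b₀ := fun b hb =>
    (Ideal.Quotient.mk_eq_mk_iff_of_ker_eq hχ).mp (hcong b hb b₀ hb₀)
  have hcount : ∀ c, classCount χ c (u * L.prod) = (L.map (classCount χ c)).sum := fun c => by
    rw [classCount_unit_mul χ c hu, classCount_list_prod χ c fun h0 => (hatoms 0 h0).1 rfl]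
  rcases (hatoms b₀ hb₀).class_eq_zero_or_eq_two hχ with h | h
  · have h0 : classCount χ 0 (u * L.prod) = L.length := by
      rw [hcount, List.sum_map_eq_length fun b hb =>
        (hatoms b hb).classCount_zero_eq_one hχ ((hcls b hb).trans h)]
    rw [h0, if_neg hlen]
  · have h0 : classCount χ 0 (u * L.prod) = 0 := by
      rw [hcount, List.sum_eq_zero fun n hn => ?_]
      obtain ⟨b, hb, rfl⟩ := List.mem_map.mp hn
      exact classCount_zero_eq_zero χ (by rw [hcls b hb, h]; decide)
    rw [h0, if_pos rfl, hcount, List.sum_map_eq_length fun b hb =>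
      classCount_two_eq_one ((hcls b hb).trans h)]

lemma tauElasticity_eq_one_of_length_eq {I : Ideal R} {a : R} (ha : IsTauAtomic I a)
    (h : ∀ L₁ L₂ : List R, IsTauAtomicFactorization I a L₁ →
      IsTauAtomicFactorization I a L₂ → L₁.length = L₂.length) :
    tauElasticity I a = 1 := by
  have hdiv : ∀ L, IsTauAtomicFactorization I a L → (L.length : ℝ≥0∞) / L.length = 1 :=
    fun L hL => ENNReal.div_self (Nat.cast_ne_zero.mpr hL.1.length_ne_zero)
      (ENNReal.natCast_ne_top _)
  obtain ⟨L₀, hL₀⟩ := ha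
  refine le_antisymm (sSup_le ?_) (le_sSup ⟨L₀, L₀, hL₀, hL₀, (hdiv L₀ hL₀).symm⟩)
  rintro r ⟨L₁, L₂, h₁, h₂, rfl⟩
  rw [h L₁ L₂ h₁ h₂, hdiv L₂ h₂]

/-- UFD `R`, `R/I ≅ ℤ/4ℤ`: every `τ_I`-atomic element has `τ_I`-elasticity `1`,
i.e. all its `τ_I`-factorizations into atoms have the same length. -/
theorem stmt_10 {R : Type*} [CommRing R] [IsDomain R] [UniqueFactorizationMonoid R]
    (I : Ideal R) (f : (R ⧸ I) ≃+* ZMod 4) (a : R) (ha : IsTauAtomic I a) :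
    tauElasticity I a = 1 ∧
    ∀ L₁ L₂ : List R, IsTauAtomicFactorization I a L₁ →
      IsTauAtomicFactorization I a L₂ → L₁.length = L₂.length := by
  let _ := UniqueFactorizationMonoid.strongNormalizationMonoid (α := R)
  let χ : R →+* ZMod 4 := f.toRingHom.comp (Ideal.Quotient.mk I)
  have hχ : RingHom.ker χ = I := by
    rw [RingHom.ker_comp_of_injective _ f.injective, Ideal.mk_ker]
  have hlen : ∀ L₁ L₂ : List R, IsTauAtomicFactorization I a L₁ →
      IsTauAtomicFactorization I a L₂ → L₁.length = L₂.length := fun _ _ h₁ h₂ => by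
    rw [h₁.length_eq hχ, h₂.length_eq hχ]
  exact ⟨tauElasticity_eq_one_of_length_eq ha hlen, hlen⟩
end

section
/- Let R be a UFD and I an ideal with R/I ≅ 𝔽₄. Then every τ_I-atomic element w of R has τ_I-elasticity ρ_I(w) = 1; in particular R is a τ_I-half factorial domain. -/
open Polynomial
open scoped ENNReal

variable {R : Type*} [CommRing R]

/-!
Since `ℤ[X]/(2, X² + X + 1) ≅ 𝔽₂[X]/(X² + X + 1)`, the residue ring `R/I` is a field whose nonzero
elements are cube roots of unity. Fix a normalization of the UFD `R`.

A `τ_I`-atom `a ∈ I` has exactly one prime factor in `I`: with two of them, `p` and `q`, the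
splitting `a = (p r) · q` has both factors `≡ 0`. A `τ_I`-atom `a ∉ I` has exactly one normalized
prime factor whose residue is not `1`. With none, `a` is congruent to a unit `u`, and
`a = (u⁻² a) · u²` splits `a` into two factors of residue `ū²`. With two, `p` and `q`, write
`a = p q r`: the residues of `p`, `q` and `a` are primitive cube roots of unity, which forces one
of the splittings `(q r) · p`, `(p r) · q`, `r · (p q)` to have congruent factors.

All factors of a `τ_I`-factorization of `w` have the same residue, so the length of a
`τ_I`-atomic factorization of `w` is the number of prime factors of `w` in `I` if `w ∈ I`, and the
number of its normalized prime factors with residue `≠ 1` otherwise.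
-/

theorem irreducible_X_sq_add_X_add_one_zmod_two : Irreducible (X ^ 2 + X + 1 : (ZMod 2)[X]) := by
  have hdeg : (X ^ 2 + X + 1 : (ZMod 2)[X]).natDegree = 2 := by compute_degree!
  have hroot : ∀ x : ZMod 2, x ^ 2 + x + 1 ≠ 0 := by decide
  exact irreducible_of_degree_le_three_of_not_isRoot (by simp [hdeg]) fun x => by
    simpa using hroot x

instance : Fact (Irreducible (X ^ 2 + X + 1 : (ZMod 2)[X])) :=
  ⟨irreducible_X_sq_add_X_add_one_zmod_two⟩

theorem natCard_adjoinRoot_X_sq_add_X_add_one :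
    Nat.card (AdjoinRoot (X ^ 2 + X + 1 : (ZMod 2)[X])) = 4 := by
  have hdeg : (X ^ 2 + X + 1 : (ZMod 2)[X]).natDegree = 2 := by compute_degree!
  let b := AdjoinRoot.powerBasis irreducible_X_sq_add_X_add_one_zmod_two.ne_zero
  have := b.finite
  rw [Module.natCard_eq_pow_finrank (K := ZMod 2), b.finrank, AdjoinRoot.powerBasis_dim, hdeg,
    Nat.card_zmod]
  rfl

theorem ker_adjoinRoot_mk_comp_mapRingHom_intCast :
    RingHom.ker ((AdjoinRoot.mk (X ^ 2 + X + 1 : (ZMod 2)[X])).comp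
      (mapRingHom (Int.castRingHom (ZMod 2)))) = Ideal.span {2, X ^ 2 + X + 1} := by
  have hsurj : Function.Surjective (mapRingHom (Int.castRingHom (ZMod 2))) :=
    map_surjective _ ZMod.intCast_surjective
  have hspan : Ideal.span {(X ^ 2 + X + 1 : (ZMod 2)[X])} =
      (Ideal.span {X ^ 2 + X + 1}).map (mapRingHom (Int.castRingHom (ZMod 2))) := by
    simp [Ideal.map_span]
  change RingHom.ker ((Ideal.Quotient.mk _).comp _) = _
  rw [← RingHom.comap_ker, Ideal.mk_ker, hspan, Ideal.comap_map_of_surjective' _ hsurj,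
    ker_mapRingHom, ZMod.ker_intCastRingHom, Ideal.map_span, Ideal.span_insert, sup_comm]
  simp

noncomputable def quotientSpanTwoEquivAdjoinRoot :
    ℤ[X] ⧸ Ideal.span ({2, X ^ 2 + X + 1} : Set ℤ[X]) ≃+*
      AdjoinRoot (X ^ 2 + X + 1 : (ZMod 2)[X]) :=
  (Ideal.quotEquivOfEq ker_adjoinRoot_mk_comp_mapRingHom_intCast.symm).trans
    (RingHom.quotientKerEquivOfSurjective
      (AdjoinRoot.mk_surjective.comp (map_surjective _ ZMod.intCast_surjective)))

theorem sq_add_self_add_one_eq_zero {K : Type*} [CommRing K] [IsDomain K] {x : K}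
    (hx3 : x ^ 3 = 1) (hx1 : x ≠ 1) : x ^ 2 + x + 1 = 0 := by
  have : (x - 1) * (x ^ 2 + x + 1) = 0 := by linear_combination hx3
  exact (mul_eq_zero.mp this).resolve_left (sub_ne_zero.mpr hx1)

theorem eq_or_eq_sq_of_sq_add_self_add_one_eq_zero {K : Type*} [CommRing K] [IsDomain K]
    {x z : K} (hx : x ^ 2 + x + 1 = 0) (hz : z ^ 2 + z + 1 = 0) : z = x ∨ z = x ^ 2 := by
  have : (z - x) * (z - x ^ 2) = 0 := by linear_combination hz - z * hx + (x - 1) * hx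
  simpa only [mul_eq_zero, sub_eq_zero] using this

theorem eq_mul_or_eq_mul_or_eq_mul_of_pow_three_eq_one {K : Type*} [CommRing K] [IsDomain K]
    (h3 : ∀ x : K, x ≠ 0 → x ^ 3 = 1) {x y t : K} (hx0 : x ≠ 0) (hx1 : x ≠ 1)
    (hy0 : y ≠ 0) (hy1 : y ≠ 1) (hz0 : x * y * t ≠ 0) (hz1 : x * y * t ≠ 1) :
    x = y * t ∨ y = x * t ∨ t = x * y := by
  have hx := sq_add_self_add_one_eq_zero (h3 x hx0) hx1
  have hy := sq_add_self_add_one_eq_zero (h3 y hy0) hy1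
  have hz := sq_add_self_add_one_eq_zero (h3 _ hz0) hz1
  rcases eq_or_eq_sq_of_sq_add_self_add_one_eq_zero hx hz with hzx | hzx
  · rcases eq_or_eq_sq_of_sq_add_self_add_one_eq_zero hy hz with hzy | hzy
    · right; right
      have hyt : y * t = 1 := mul_left_cancel₀ hx0 (by linear_combination hzx)
      linear_combination y ^ 2 * hyt - y * (hzx.symm.trans hzy) - t * h3 y hy0
    · right; left
      exact mul_left_cancel₀ hy0 (by linear_combination -hzy)
  · left
    exact mul_left_cancel₀ hx0 (by linear_combination -hzx)

theorem pow_three_eq_one_of_natCard_eq_four {K : Type*} [Field K] (hK : Nat.card K = 4)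
    {x : K} (hx : x ≠ 0) : x ^ 3 = 1 := by
  have : Finite K := Nat.finite_of_card_ne_zero (by omega)
  have : Fintype K := Fintype.ofFinite K
  rw [Nat.card_eq_fintype_card] at hK
  simpa [hK] using FiniteField.pow_card_sub_one_eq_one x hx

section Factorization

variable {I : Ideal R} {a c d w : R}

theorem IsTauFactorization.length_pos {L : List R} (hL : IsTauFactorization I w L) :
    0 < L.length :=
  List.length_pos_iff.mpr hL.1

theorem IsTauAtom.mk_ne_mk_of_eq_mul (ha : IsTauAtom I a) (h : a = c * d) :
    Ideal.Quotient.mk I c ≠ Ideal.Quotient.mk I d := by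
  intro hcd
  have := ha.2.2 [c, d] ⟨List.cons_ne_nil _ _, ⟨1, isUnit_one, by simp [h]⟩, by simp [hcd]⟩
  simp at this

theorem IsTauAtom.mk_ne_one (ha : IsTauAtom I a) : Ideal.Quotient.mk I a ≠ 1 := by
  simpa using ha.mk_ne_mk_of_eq_mul (mul_one a).symm

theorem IsTauAtom.mk_ne_mk_unit [I.IsPrime] (h3 : ∀ x : R ⧸ I, x ≠ 0 → x ^ 3 = 1)
    (ha : IsTauAtom I a) (u : Rˣ) : Ideal.Quotient.mk I a ≠ Ideal.Quotient.mk I u := by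
  intro hau
  have hinv : (↑u⁻¹ * u : R) = 1 := u.inv_mul
  refine ha.mk_ne_mk_of_eq_mul (c := ↑u⁻¹ * ↑u⁻¹ * a) (d := u * u)
    (by linear_combination (-a * (↑u⁻¹ * u + 1)) * hinv) ?_
  have hu3 := h3 _ ((u.isUnit.map (Ideal.Quotient.mk I)).ne_zero)
  have hsu := congrArg (Ideal.Quotient.mk I) hinv
  simp only [map_mul, map_one] at hsu ⊢
  linear_combination (Ideal.Quotient.mk I ↑u⁻¹) ^ 2 * hau
    + (Ideal.Quotient.mk I ↑u⁻¹ + Ideal.Quotient.mk I ↑u ^ 2) * hsu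
    - Ideal.Quotient.mk I ↑u⁻¹ * hu3

theorem tauElasticity_eq_one (hw : IsTauAtomic I w)
    (h : ∀ L₁ L₂ : List R, IsTauAtomicFactorization I w L₁ →
      IsTauAtomicFactorization I w L₂ → L₁.length = L₂.length) :
    tauElasticity I w = 1 := by
  have hset : {r : ℝ≥0∞ | ∃ L₁ L₂ : List R, IsTauAtomicFactorization I w L₁ ∧
      IsTauAtomicFactorization I w L₂ ∧ r = (L₁.length : ℝ≥0∞) / (L₂.length : ℝ≥0∞)} = {1} := by
    ext r
    constructor
    · rintro ⟨L₁, L₂, h₁, h₂, rfl⟩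
      rw [h L₁ L₂ h₁ h₂, ENNReal.div_self (by simpa using h₂.1.length_pos.ne') (by simp)]
      rfl
    · rintro rfl
      obtain ⟨L, hL⟩ := hw
      exact ⟨L, L, hL, hL, (ENNReal.div_self (by simpa using hL.1.length_pos.ne') (by simp)).symm⟩
  rw [tauElasticity, hset, sSup_singleton]

end Factorization

section NormalizedFactors

open UniqueFactorizationMonoid

variable {α : Type*} [CommMonoidWithZero α] [UniqueFactorizationMonoid α] [NormalizationMonoid α]

theorem countP_normalizedFactors_mul_prod (P : α → Prop) [DecidablePred P] {u : α}
    (hu : IsUnit u) {L : List α} (hL : ∀ b ∈ L, b ≠ 0 ∧ (normalizedFactors b).countP P = 1) :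
    (normalizedFactors (u * L.prod)).countP P = L.length := by
  induction L with
  | nil => simp [normalizedFactors_of_isUnit hu]
  | cons b L ih =>
    obtain ⟨hb0, hb⟩ := hL b List.mem_cons_self
    have hL' := fun c hc => hL c (List.mem_cons_of_mem b hc)
    have : Nontrivial α := ⟨⟨b, 0, hb0⟩⟩
    have hprod : u * L.prod ≠ 0 :=
      mul_ne_zero hu.ne_zero (List.prod_ne_zero fun h0 => (hL' 0 h0).1 rfl)
    rw [List.prod_cons, mul_left_comm, normalizedFactors_mul hb0 hprod, Multiset.countP_add, hb,
      ih hL', List.length_cons, add_comm]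

theorem exists_eq_mul_mul_of_two_le_countP (P : α → Prop) [DecidablePred P] {b : α}
    (hb : b ≠ 0) (h : 2 ≤ (normalizedFactors b).countP P) : ∃ p q r, P p ∧ P q ∧ b = p * q * r := by
  rw [Multiset.countP_eq_card_filter] at h
  obtain ⟨p, hp⟩ :=
    Multiset.card_pos_iff_exists_mem.mp (by omega : 0 < ((normalizedFactors b).filter P).card)
  obtain ⟨F, hF⟩ := Multiset.exists_cons_of_mem hp
  obtain ⟨q, hq⟩ := Multiset.card_pos_iff_exists_mem.mp (show 0 < F.card by simp [hF] at h; omega)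
  obtain ⟨G, hG⟩ := Multiset.exists_cons_of_mem hq
  have hdvd : p * q ∣ b := calc
    p * q ∣ ((normalizedFactors b).filter P).prod := by
      rw [hF, hG, Multiset.prod_cons, Multiset.prod_cons, ← mul_assoc]
      exact dvd_mul_right _ _
    _ ∣ (normalizedFactors b).prod := Multiset.prod_dvd_prod_of_le (Multiset.filter_le _ _)
    _ ∣ b := (prod_normalizedFactors hb).dvd
  obtain ⟨r, hr⟩ := hdvd
  exact ⟨p, q, r, (Multiset.mem_filter.mp hp).2,
    (Multiset.mem_filter.mp (hF ▸ Multiset.mem_cons_of_mem hq)).2, hr⟩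

end NormalizedFactors

section TauAtoms

open UniqueFactorizationMonoid
open scoped Classical

variable [UniqueFactorizationMonoid R] [NormalizationMonoid R] {I : Ideal R} {a w : R}

theorem IsTauAtom.countP_mem_eq_one [hI : I.IsPrime] (ha : IsTauAtom I a) (haI : a ∈ I) :
    (normalizedFactors a).countP (· ∈ I) = 1 := by
  have hpos : 0 < (normalizedFactors a).countP (· ∈ I) := by
    have hprod : (normalizedFactors a).prod ∈ I :=
      I.mem_of_dvd (prod_normalizedFactors ha.1).symm.dvd haI
    exact Multiset.countP_pos.mpr ((hI.multiset_prod_mem_iff_exists_mem _).mp hprod)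
  refine le_antisymm (not_lt.mp fun h2 => ?_) hpos
  obtain ⟨p, q, r, hp, hq, rfl⟩ := exists_eq_mul_mul_of_two_le_countP (· ∈ I) ha.1 h2
  refine ha.mk_ne_mk_of_eq_mul (c := p * r) (d := q) (by ring) ?_
  rw [Ideal.Quotient.eq_zero_iff_mem.mpr hq, Ideal.Quotient.eq_zero_iff_mem]
  exact I.mul_mem_right r hp

theorem IsTauAtom.countP_mk_ne_one_eq_one [I.IsPrime] (h3 : ∀ x : R ⧸ I, x ≠ 0 → x ^ 3 = 1)
    (ha : IsTauAtom I a) (haI : a ∉ I) :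
    (normalizedFactors a).countP (fun p => Ideal.Quotient.mk I p ≠ 1) = 1 := by
  have hpos : 0 < (normalizedFactors a).countP (fun p => Ideal.Quotient.mk I p ≠ 1) := by
    obtain ⟨u, hu⟩ := prod_normalizedFactors ha.1
    refine Nat.pos_of_ne_zero fun h0 => ha.mk_ne_mk_unit h3 u ?_
    have hprod : Ideal.Quotient.mk I (normalizedFactors a).prod = 1 := by
      rw [map_multiset_prod]
      exact Multiset.prod_eq_one (by simpa [Multiset.countP_eq_zero] using h0)
    rw [← hu, map_mul, hprod, one_mul]
  refine le_antisymm (not_lt.mp fun h2 => ?_) hpos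
  obtain ⟨p, q, r, hp, hq, rfl⟩ :=
    exists_eq_mul_mul_of_two_le_countP (fun p => Ideal.Quotient.mk I p ≠ 1) ha.1 h2
  have hmk0 : Ideal.Quotient.mk I (p * q * r) ≠ 0 := mt Ideal.Quotient.eq_zero_iff_mem.mp haI
  have hmk1 := ha.mk_ne_one
  simp only [map_mul] at hmk0 hmk1
  rcases eq_mul_or_eq_mul_or_eq_mul_of_pow_three_eq_one h3
    (left_ne_zero_of_mul (left_ne_zero_of_mul hmk0)) hp
    (right_ne_zero_of_mul (left_ne_zero_of_mul hmk0)) hq hmk0 hmk1 with h | h | h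
  · exact ha.mk_ne_mk_of_eq_mul (c := q * r) (d := p) (by ring) (by simpa using h.symm)
  · exact ha.mk_ne_mk_of_eq_mul (c := p * r) (d := q) (by ring) (by simpa using h.symm)
  · exact ha.mk_ne_mk_of_eq_mul (c := r) (d := p * q) (by ring) (by simpa using h)

theorem IsTauAtomicFactorization.length_eq_s13 [I.IsPrime] (h3 : ∀ x : R ⧸ I, x ≠ 0 → x ^ 3 = 1)
    {L : List R} (hL : IsTauAtomicFactorization I w L) :
    L.length = if w ∈ I then (normalizedFactors w).countP (· ∈ I)
      else (normalizedFactors w).countP (fun p => Ideal.Quotient.mk I p ≠ 1) := by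
  have hlen := hL.1.length_pos
  obtain ⟨⟨hne, ⟨u, hu, rfl⟩, hcong⟩, hatoms⟩ := hL
  obtain ⟨b₀, hb₀⟩ := List.exists_mem_of_ne_nil L hne
  have hmk : Ideal.Quotient.mk I (u * L.prod) =
      Ideal.Quotient.mk I u * Ideal.Quotient.mk I b₀ ^ L.length := by
    rw [map_mul, map_list_prod, List.eq_replicate_iff.mpr ⟨List.length_map _,
      by simpa using fun b hb => hcong b hb b₀ hb₀⟩, List.prod_replicate]
  have hmem : ∀ b ∈ L, b ∈ I ↔ u * L.prod ∈ I := fun b hb => by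
    simp only [← Ideal.Quotient.eq_zero_iff_mem, hcong b hb b₀ hb₀, hmk, mul_eq_zero,
      (hu.map _).ne_zero, false_or, pow_eq_zero_iff hlen.ne']
  split_ifs with hw
  · exact (countP_normalizedFactors_mul_prod _ hu fun b hb =>
      ⟨(hatoms b hb).1, (hatoms b hb).countP_mem_eq_one ((hmem b hb).mpr hw)⟩).symm
  · exact (countP_normalizedFactors_mul_prod _ hu fun b hb =>
      ⟨(hatoms b hb).1, (hatoms b hb).countP_mk_ne_one_eq_one h3 (mt (hmem b hb).mp hw)⟩).symm

end TauAtoms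

theorem stmt_13_general {R : Type*} [CommRing R] [UniqueFactorizationMonoid R]
    (I : Ideal R)
    (f : (R ⧸ I) ≃+* (ℤ[X] ⧸ Ideal.span ({2, X ^ 2 + X + 1} : Set ℤ[X]))) :
    ∀ w : R, IsTauAtomic I w →
      tauElasticity I w = 1 ∧
      ∀ L₁ L₂ : List R, IsTauAtomicFactorization I w L₁ →
        IsTauAtomicFactorization I w L₂ → L₁.length = L₂.length := by
  let := UniqueFactorizationMonoid.strongNormalizationMonoid (α := R)
  let e := f.trans quotientSpanTwoEquivAdjoinRoot
  have : I.IsPrime := (Ideal.Quotient.isDomain_iff_prime I).mp (MulEquiv.isDomain _ e.toMulEquiv)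
  have h3 (x : R ⧸ I) (hx : x ≠ 0) : x ^ 3 = 1 := e.injective <| by
    simpa using pow_three_eq_one_of_natCard_eq_four natCard_adjoinRoot_X_sq_add_X_add_one
      (e.map_ne_zero_iff.mpr hx)
  intro w hw
  have hlen (L₁ L₂ : List R) (h₁ : IsTauAtomicFactorization I w L₁)
      (h₂ : IsTauAtomicFactorization I w L₂) : L₁.length = L₂.length := by
    rw [h₁.length_eq_s13 h3, h₂.length_eq_s13 h3]
  exact ⟨tauElasticity_eq_one hw hlen, hlen⟩

/-- UFD `R`, `R/I ≅ 𝔽₄`: every `τ_I`-atomic element has `τ_I`-elasticity `1`, so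
`R` is a `τ_I`-half factorial domain. -/
theorem stmt_13 {R : Type*} [CommRing R] [IsDomain R] [UniqueFactorizationMonoid R]
    (I : Ideal R)
    (f : (R ⧸ I) ≃+* (ℤ[X] ⧸ Ideal.span ({2, X ^ 2 + X + 1} : Set ℤ[X]))) :
    ∀ w : R, IsTauAtomic I w →
      tauElasticity I w = 1 ∧
      ∀ L₁ L₂ : List R, IsTauAtomicFactorization I w L₁ →
        IsTauAtomicFactorization I w L₂ → L₁.length = L₂.length :=
  stmt_13_general I f
end

section
/- In ℤ[x] with I = (2, x²+x), for every integer i ≥ 1 the element x·(x+1)^i is a τ_I-atom, and so is (x+1)·x^i. -/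
open Polynomial
open scoped ENNReal

variable {R : Type*} [CommRing R]

lemma mem_I_even_eval {f : ℤ[X]} (r : ℤ)
    (hf : f ∈ Ideal.span ({2, X ^ 2 + X} : Set ℤ[X])) : (2 : ℤ) ∣ f.eval r := by
  rw [Ideal.mem_span_pair] at hf
  obtain ⟨a, b, hab⟩ := hf
  have : f.eval r = a.eval r * 2 + b.eval r * (r ^ 2 + r) := by
    rw [← hab]; simp [mul_comm]
  rw [this]
  have h2 : (2 : ℤ) ∣ r ^ 2 + r := by
    obtain ⟨k, hk⟩ := Int.even_mul_succ_self r
    exact ⟨k, by nlinarith [hk]⟩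
  exact dvd_add (dvd_mul_left 2 _) (h2.mul_left _)

lemma tau_atom_aux (p q : ℤ[X]) (r : ℤ) (i : ℕ)
    (hp : Prime p) (hpr : p.eval r = 0) (hqr : IsUnit (q.eval r)) :
    IsTauAtom (Ideal.span ({2, X ^ 2 + X} : Set ℤ[X])) (p * q ^ i) := by
  have hq0 : q ≠ 0 := by
    rintro rfl
    simp at hqr
  have ha0 : p * q ^ i ≠ 0 := mul_ne_zero hp.ne_zero (pow_ne_zero _ hq0)
  refine ⟨ha0, ?_, ?_⟩
  · intro hu
    exact hp.not_unit (isUnit_of_dvd_unit (dvd_mul_right p _) hu)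
  · rintro L ⟨hL0, ⟨u, hu, hprod⟩, hcong⟩
    by_contra hlen
    -- L has length ≥ 2
    have hge1 : 1 ≤ L.length := List.length_pos_iff.mpr hL0
    have hge2 : 2 ≤ L.length := by omega
    -- p divides L.prod
    have hpdvd : p ∣ L.prod := by
      have : p ∣ u * L.prod := by
        rw [← hprod]; exact dvd_mul_right p _
      rcases hp.dvd_mul.mp this with h | h
      · exact absurd (isUnit_of_dvd_unit h hu) hp.not_unit
      · exact h
    obtain ⟨b, hbL, hbdvd⟩ := (Prime.dvd_prod_iff hp).mp hpdvd
    obtain ⟨c, rfl⟩ := hbdvd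
    -- the rest of the list
    set rest := L.erase (p * c) with hrest
    have hrest_prod : (p * c) * rest.prod = L.prod := List.prod_erase hbL
    have hrest_len : rest.length = L.length - 1 := List.length_erase_of_mem hbL
    have hrest_ne : rest ≠ [] := by
      intro h
      rw [h] at hrest_len
      simp at hrest_len
      omega
    set b' := rest.head hrest_ne with hb'
    have hb'rest : b' ∈ rest := List.head_mem hrest_ne
    have hb'L : b' ∈ L := List.mem_of_mem_erase hb'rest
    -- cancel p
    have hkey : u * (c * rest.prod) = q ^ i := by
      have h1 : p * (u * (c * rest.prod)) = p * q ^ i := by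
        rw [hprod, ← hrest_prod]; ring
      exact mul_left_cancel₀ hp.ne_zero h1
    -- evaluate at r
    have hev : u.eval r * (c.eval r * (rest.prod).eval r) = (q.eval r) ^ i := by
      have := congrArg (Polynomial.eval r) hkey
      simpa using this
    have hunit : IsUnit ((rest.prod).eval r) := by
      have : IsUnit (u.eval r * (c.eval r * (rest.prod).eval r)) := by
        rw [hev]; exact hqr.pow i
      exact isUnit_of_mul_isUnit_right (isUnit_of_mul_isUnit_right this)
    have hb'unit : IsUnit (b'.eval r) := by
      have hdvd : b' ∣ rest.prod := List.dvd_prod hb'rest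
      have : b'.eval r ∣ (rest.prod).eval r := by
        obtain ⟨m, hm⟩ := hdvd
        exact ⟨m.eval r, by rw [hm]; simp⟩
      exact isUnit_of_dvd_unit this hunit
    -- congruence mod I gives parity contradiction
    have hc := hcong _ hbL b' hb'L
    rw [Ideal.Quotient.eq] at hc
    have h2 : (2 : ℤ) ∣ (p * c - b').eval r := mem_I_even_eval r hc
    have : (p * c - b').eval r = -(b'.eval r) := by
      simp [hpr]
    rw [this, dvd_neg] at h2
    have : IsUnit (2 : ℤ) := isUnit_of_dvd_unit h2 hb'unit
    rw [Int.isUnit_iff] at this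
    omega

/-- In `ℤ[x]` with `I = (2, x²+x)`, for every `i ≥ 1` both `x(x+1)^i` and
`(x+1)x^i` are `τ_I`-atoms. -/
theorem stmt_14 :
    ∀ i : ℕ, 1 ≤ i →
      IsTauAtom (Ideal.span ({2, X ^ 2 + X} : Set ℤ[X])) (X * (X + 1) ^ i) ∧
      IsTauAtom (Ideal.span ({2, X ^ 2 + X} : Set ℤ[X])) ((X + 1) * X ^ i) := by
  intro i _
  constructor
  · exact tau_atom_aux X (X + 1) 0 i prime_X (by simp) (by simp)
  · have hX1 : Prime (X + 1 : ℤ[X]) := by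
      have := prime_X_sub_C (-1 : ℤ)
      simpa using this
    exact tau_atom_aux (X + 1) X (-1) i hX1 (by simp) (by simp)
end

section
/- In ℤ[x] with I = (2, x²+x), for every i ≥ 2 the element a_i = x^i(x+1)^i has a τ_I-factorization into τ_I-atoms of length 2, namely a_i = (x(x+1)^{i-1})·(x^{i-1}(x+1)), and a τ_I-factorization into τ_I-atoms of length i, namely a_i = (x(x+1))^i written as the product of i copies of the atom x(x+1). -/
open Polynomial
open scoped ENNReal

variable {R : Type*} [CommRing R]

/-!
If `π` is a prime element of a domain and `g ∉ I ⊔ (π)`, then `π * g` is a `τ_I`-atom: in a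
factorization `π * g = u * b₁ ⋯ bₖ` with `k ≥ 2`, `π` divides some `bⱼ`, so every other `bᵢ`,
being congruent to `bⱼ` mod `I`, lies in `I ⊔ (π)`; cancelling `π` puts such a `bᵢ` into a
factorization of `g`, forcing `g ∈ I ⊔ (π)`. In `ℤ[x]` with `I = (2, x² + x)` this applies to
`x (x+1)ⁿ` with `π = x` and to `xⁿ (x+1)` with `π = x + 1`, as reducing mod `2` and evaluating at
`0`, respectively `1`, kills `I ⊔ (π)` but sends `(x+1)ⁿ`, respectively `xⁿ`, to `1`.
-/

section General

theorem isTauFactorization_of_forall_mem {I : Ideal R} {a : R} {L : List R} (hne : L ≠ [])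
    (ha : a = L.prod) (hI : ∀ b ∈ L, b ∈ I) : IsTauFactorization I a L := by
  refine ⟨hne, ⟨1, isUnit_one, by rw [ha, one_mul]⟩, fun b hb c hc => ?_⟩
  rw [Ideal.Quotient.eq_zero_iff_mem.mpr (hI b hb), Ideal.Quotient.eq_zero_iff_mem.mpr (hI c hc)]

variable [IsDomain R]

theorem IsTauFactorization.length_eq_one_of_prime_mul {I : Ideal R} {π g : R} (hπ : Prime π)
    (hg : g ∉ I ⊔ Ideal.span {π}) {L : List R} (hL : IsTauFactorization I (π * g) L) :
    L.length = 1 := by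
  classical
  obtain ⟨hne, ⟨u, hu, hprod⟩, hcong⟩ := hL
  obtain ⟨_, hbL, c, rfl⟩ : ∃ b ∈ L, π ∣ b :=
    hπ.dvd_prod_iff.mp (hu.dvd_mul_left.mp ⟨g, hprod.symm⟩)
  have hg_eq : g = u * c * (L.erase (π * c)).prod := by
    apply mul_left_cancel₀ hπ.ne_zero
    rw [hprod, (List.perm_cons_erase hbL).prod_eq, List.prod_cons]
    ring
  by_contra hlen
  obtain ⟨b, hb⟩ : ∃ b, b ∈ L.erase (π * c) := by
    refine List.exists_mem_of_ne_nil _ fun h => ?_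
    have := List.length_erase_of_mem hbL
    rw [h, List.length_nil] at this
    have : L.length ≠ 0 := by simpa using hne
    omega
  have hbJ : b ∈ I ⊔ Ideal.span {π} := by
    rw [← sub_add_cancel b (π * c)]
    refine add_mem (Ideal.mem_sup_left ?_) (Ideal.mem_sup_right ?_)
    · exact Ideal.Quotient.eq.mp (hcong b (List.mem_of_mem_erase hb) _ hbL)
    · exact Ideal.mem_span_singleton.mpr (dvd_mul_right π c)
  exact hg (hg_eq ▸ Ideal.mem_of_dvd _ (dvd_mul_of_dvd_right (List.dvd_prod hb) _) hbJ)

theorem isTauAtom_prime_mul {I : Ideal R} {π g : R} (hπ : Prime π)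
    (hg : g ∉ I ⊔ Ideal.span {π}) : IsTauAtom I (π * g) := by
  have hg0 : g ≠ 0 := by
    rintro rfl
    exact hg (zero_mem _)
  exact ⟨mul_ne_zero hπ.ne_zero hg0, fun h => hπ.not_isUnit (isUnit_of_mul_isUnit_left h),
    fun _ => IsTauFactorization.length_eq_one_of_prime_mul hπ hg⟩

end General

section IntPolynomial

local notation "𝔦" => Ideal.span ({2, X ^ 2 + X} : Set ℤ[X])

theorem X_mul_X_add_one_mem : (X * (X + 1) : ℤ[X]) ∈ 𝔦 := by
  rw [mul_add_one, ← sq]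
  exact Ideal.subset_span (Set.mem_insert_of_mem _ rfl)

theorem sup_span_X_sub_C_le_ker_aeval (s : ℤ) :
    𝔦 ⊔ Ideal.span {X - C s} ≤ RingHom.ker (aeval (s : ZMod 2) : ℤ[X] →ₐ[ℤ] ZMod 2) := by
  rw [sup_le_iff, Ideal.span_le, Ideal.span_le, Set.insert_subset_iff, Set.singleton_subset_iff,
    Set.singleton_subset_iff]
  refine ⟨⟨?_, ?_⟩, ?_⟩ <;> simp only [SetLike.mem_coe, RingHom.mem_ker, map_ofNat, map_add,
    map_pow, map_sub, aeval_X, eq_intCast, map_intCast, sub_self]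
  · decide
  · generalize (s : ZMod 2) = t
    fin_cases t <;> decide

theorem isTauAtom_X_mul_X_add_one_pow (n : ℕ) : IsTauAtom 𝔦 (X * (X + 1) ^ n) := by
  refine isTauAtom_prime_mul prime_X fun h => ?_
  have := sup_span_X_sub_C_le_ker_aeval 0 (by simpa using h)
  simp at this

theorem isTauAtom_X_pow_mul_X_add_one (n : ℕ) : IsTauAtom 𝔦 (X ^ n * (X + 1)) := by
  rw [mul_comm]
  refine isTauAtom_prime_mul (by simpa using prime_X_sub_C (-1 : ℤ)) fun h => ?_
  have := sup_span_X_sub_C_le_ker_aeval (-1) (by simpa using h)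
  simp at this

end IntPolynomial

/-- In `ℤ[x]` with `I = (2, x²+x)`, for every `i ≥ 2` the element
`aᵢ = x^i (x+1)^i` has an atomic `τ_I`-factorization of length `2`, namely
`[x(x+1)^{i-1}, x^{i-1}(x+1)]`, and one of length `i`, namely `i` copies of `x(x+1)`. -/
theorem stmt_15 :
    ∀ i : ℕ, 2 ≤ i →
      IsTauAtomicFactorization (Ideal.span ({2, X ^ 2 + X} : Set ℤ[X]))
        (X ^ i * (X + 1) ^ i)
        [X * (X + 1) ^ (i - 1), X ^ (i - 1) * (X + 1)] ∧
      IsTauAtomicFactorization (Ideal.span ({2, X ^ 2 + X} : Set ℤ[X]))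
        (X ^ i * (X + 1) ^ i)
        (List.replicate i (X * (X + 1))) := by
  intro i hi
  obtain ⟨n, rfl⟩ : ∃ n, i = n + 1 := ⟨i - 1, by omega⟩
  have hn : n ≠ 0 := by omega
  rw [Nat.add_sub_cancel]
  refine ⟨⟨isTauFactorization_of_forall_mem (List.cons_ne_nil _ _) (by rw [List.prod_pair]; ring) ?_, ?_⟩,
    ⟨isTauFactorization_of_forall_mem (by simp) (by rw [List.prod_replicate, mul_pow]) ?_, ?_⟩⟩
  · simp only [List.mem_cons, List.not_mem_nil, or_false, forall_eq_or_imp, forall_eq]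
    exact ⟨Ideal.mem_of_dvd _ (mul_dvd_mul_left X (dvd_pow_self _ hn)) X_mul_X_add_one_mem,
      Ideal.mem_of_dvd _ (mul_dvd_mul_right (dvd_pow_self _ hn) _) X_mul_X_add_one_mem⟩
  · simp only [List.mem_cons, List.not_mem_nil, or_false, forall_eq_or_imp, forall_eq]
    exact ⟨isTauAtom_X_mul_X_add_one_pow n, isTauAtom_X_pow_mul_X_add_one n⟩
  · intro b hb
    rw [List.eq_of_mem_replicate hb]
    exact X_mul_X_add_one_mem
  · intro b hb
    rw [List.eq_of_mem_replicate hb]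
    simpa using isTauAtom_X_mul_X_add_one_pow 1
end

section
/- In ℤ[x] with I = (2, x²+x), the τ_I-elasticity of the element a_i = x^i(x+1)^i satisfies ρ_I(a_i) = i/2 for every i ≥ 2; consequently the τ_I-elasticity of ℤ[x] (the supremum of ρ_I(a) over τ_I-atomic a) is infinite. -/
open Polynomial
open scoped ENNReal

variable {R : Type*} [CommRing R]

/-!
Evaluation at an integer followed by reduction mod `2` kills `I = (2, x² + x)`, so it takes one
value on all factors of a `τ_I`-factorization of `x^J (x+1)^K`. Some factor is divisible by `x`, so
evaluation at `0` vanishes on every factor; a factor prime to `x` would divide `(x+1)^K`, which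
evaluates to `1`. Hence `x`, and symmetrically `x + 1`, divides every factor, and a
`τ_I`-factorization of `x^J (x+1)^K` has at most `min J K` factors. In particular `x (x+1)^k` and
`x^j (x+1)` are `τ_I`-atoms, and `aᵢ` has the atomic factorizations `(x (x+1))^i` of length `i` and
`x (x+1)^(i-1) · x^(i-1) (x+1)` of length `2`, while no atomic factorization has length `1` since
`aᵢ` is not an atom. So `ρ_I(aᵢ) = i / 2`, which is unbounded.
-/

lemma List.pow_length_dvd_prod {M : Type*} [CommMonoid M] {p : M} {L : List M}
    (h : ∀ b ∈ L, p ∣ b) : p ^ L.length ∣ L.prod := by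
  simpa using Multiset.prod_dvd_prod_of_dvd (S := (L : Multiset M)) (fun _ ↦ p) id h

lemma isTauFactorization_prod {I : Ideal R} {L : List R} (hL : L ≠ []) (hI : ∀ b ∈ L, b ∈ I) :
    IsTauFactorization I L.prod L := by
  refine ⟨hL, ⟨1, isUnit_one, (one_mul _).symm⟩, fun b hb c hc ↦ ?_⟩
  rw [Ideal.Quotient.eq_zero_iff_mem.mpr (hI b hb), Ideal.Quotient.eq_zero_iff_mem.mpr (hI c hc)]

namespace IsTauFactorization

variable {I : Ideal R} {a : R} {L : List R}

lemma one_le_length (h : IsTauFactorization I a L) : 1 ≤ L.length :=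
  List.length_pos_iff.mpr h.1

lemma prod_dvd (h : IsTauFactorization I a L) : L.prod ∣ a := by
  obtain ⟨u, -, rfl⟩ := h.2.1
  exact dvd_mul_left _ _

lemma exists_dvd_of_prime_dvd (h : IsTauFactorization I a L) {p : R} (hp : Prime p)
    (hpa : p ∣ a) : ∃ b ∈ L, p ∣ b := by
  obtain ⟨u, hu, rfl⟩ := h.2.1
  refine (hp.dvd_prod_iff).mp ((hp.dvd_mul.mp hpa).resolve_left fun hpu ↦ ?_)
  exact hp.not_isUnit (isUnit_of_dvd_unit hpu hu)

lemma map_eq {S : Type*} [CommRing S] {f : R →+* S} (hf : I ≤ RingHom.ker f)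
    (h : IsTauFactorization I a L) {b c : R} (hb : b ∈ L) (hc : c ∈ L) : f b = f c := by
  have hbc : b - c ∈ RingHom.ker f := hf (Ideal.Quotient.eq.mp (h.2.2 b hb c hc))
  rwa [RingHom.mem_ker, map_sub, sub_eq_zero] at hbc

lemma of_associated (h : IsTauFactorization I a L) {b : R} (hab : Associated a b) :
    IsTauFactorization I b L := by
  obtain ⟨v, rfl⟩ := hab
  obtain ⟨u, hu, rfl⟩ := h.2.1
  exact ⟨h.1, ⟨u * v, hu.mul v.isUnit, by ring⟩, h.2.2⟩

variable [IsDomain R] [DecompositionMonoid R] {S : Type*} [CommRing S] [Nontrivial S]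
  {f : R →+* S} {p q : R}

lemma prime_dvd_of_mem (hf : I ≤ RingHom.ker f) (hp : Prime p) (hfp : f p = 0)
    (hfq : IsUnit (f q)) {J K : ℕ} (hJ : J ≠ 0) (h : IsTauFactorization I (p ^ J * q ^ K) L)
    {b : R} (hb : b ∈ L) : p ∣ b := by
  obtain ⟨b₀, hb₀, hpb₀⟩ :=
    h.exists_dvd_of_prime_dvd hp (dvd_mul_of_dvd_left (dvd_pow_self p hJ) _)
  have hfb : f b = 0 := by
    obtain ⟨c, rfl⟩ := hpb₀
    rw [h.map_eq hf hb hb₀, map_mul, hfp, zero_mul]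
  by_contra hpb
  have hbq : b ∣ q ^ K :=
    (((hp.irreducible.isRelPrime_iff_not_dvd.mpr hpb).symm.pow_right).dvd_of_dvd_mul_left
      ((List.dvd_prod hb).trans h.prod_dvd))
  have : IsUnit (f b) := isUnit_of_dvd_unit (map_dvd f hbq) (by simpa using hfq.pow K)
  exact not_isUnit_zero (hfb ▸ this)

lemma length_le (hf : I ≤ RingHom.ker f) (hp : Prime p) (hfp : f p = 0) (hfq : IsUnit (f q))
    {J K : ℕ} (hJ : J ≠ 0) (h : IsTauFactorization I (p ^ J * q ^ K) L) : L.length ≤ J := by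
  have hpq : ¬ p ∣ q ^ K := fun hpq ↦ by
    have := map_dvd f (hp.dvd_of_dvd_pow hpq)
    rw [hfp, zero_dvd_iff] at this
    exact not_isUnit_zero (this ▸ hfq)
  have hdvd : p ^ L.length ∣ p ^ J * q ^ K :=
    (List.pow_length_dvd_prod fun b hb ↦ h.prime_dvd_of_mem hf hp hfp hfq hJ hb).trans h.prod_dvd
  exact (pow_dvd_pow_iff hp.ne_zero hp.not_isUnit).mp (hp.pow_dvd_of_dvd_mul_right _ hpq hdvd)

end IsTauFactorization

lemma IsTauAtomicFactorization.length_eq_one_of_length_eq_one {I : Ideal R} {a : R}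
    {L M : List R} (hL : IsTauAtomicFactorization I a L) (hL1 : L.length = 1)
    (hM : IsTauFactorization I a M) : M.length = 1 := by
  obtain ⟨b, rfl⟩ := List.length_eq_one_iff.mp hL1
  obtain ⟨u, hu, hab⟩ := hL.1.2.1
  refine (hL.2 b (by simp)).2.2 M (hM.of_associated ?_)
  rw [hab, List.prod_singleton]
  exact associated_unit_mul_left b u hu

namespace TauIntPoly

local notation "𝕀" => Ideal.span ({2, X ^ 2 + X} : Set ℤ[X])

noncomputable def evalMod2 (r : ℤ) : ℤ[X] →+* ZMod 2 :=
  (Int.castRingHom (ZMod 2)).comp (evalRingHom r)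

lemma span_le_ker_evalMod2 (r : ℤ) : 𝕀 ≤ RingHom.ker (evalMod2 r) := by
  have hsq : ∀ x : ZMod 2, x ^ 2 + x = 0 := by decide
  rw [Ideal.span_le]
  rintro x (rfl | rfl)
  · simp [evalMod2]; decide
  · simpa [evalMod2] using hsq r

lemma prime_X_add_one : Prime (X + 1 : ℤ[X]) := by
  simpa using prime_X_sub_C (-1 : ℤ)

lemma length_le_left {J K : ℕ} (hJ : J ≠ 0) {L : List ℤ[X]}
    (h : IsTauFactorization 𝕀 (X ^ J * (X + 1) ^ K) L) : L.length ≤ J :=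
  h.length_le (span_le_ker_evalMod2 0) prime_X (by simp [evalMod2]) (by simp [evalMod2]) hJ

lemma length_le_right {J K : ℕ} (hK : K ≠ 0) {L : List ℤ[X]}
    (h : IsTauFactorization 𝕀 (X ^ J * (X + 1) ^ K) L) : L.length ≤ K := by
  rw [mul_comm] at h
  refine h.length_le (span_le_ker_evalMod2 1) prime_X_add_one ?_ (by simp [evalMod2]) hK
  simp [evalMod2]; decide

lemma isTauAtom_X_pow_mul {j k : ℕ} (hj : j ≠ 0) (hjk : j = 1 ∨ k = 1) :
    IsTauAtom 𝕀 (X ^ j * (X + 1) ^ k) := by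
  refine ⟨mul_ne_zero (pow_ne_zero _ X_ne_zero) (pow_ne_zero _ prime_X_add_one.ne_zero),
    fun hu ↦ not_isUnit_X (isUnit_of_dvd_unit (dvd_mul_of_dvd_left (dvd_pow_self X hj) _) hu),
    fun L hL ↦ ?_⟩
  have := hL.one_le_length
  rcases hjk with rfl | rfl
  · have := length_le_left one_ne_zero hL; omega
  · have := length_le_right one_ne_zero hL; omega

lemma X_mul_X_add_one_mem : (X * (X + 1) : ℤ[X]) ∈ 𝕀 :=
  Ideal.subset_span (Or.inr (by ring : (X * (X + 1) : ℤ[X]) = X ^ 2 + X))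

lemma isTauAtomicFactorization_replicate {i : ℕ} (hi : i ≠ 0) :
    IsTauAtomicFactorization 𝕀 (X ^ i * (X + 1) ^ i) (List.replicate i (X * (X + 1))) := by
  have hatom : IsTauAtom 𝕀 (X * (X + 1)) := by
    simpa using isTauAtom_X_pow_mul (k := 1) one_ne_zero (Or.inl rfl)
  have hfac := isTauFactorization_prod (L := List.replicate i (X * (X + 1)))
    (by simpa using hi) fun b hb ↦ (List.eq_of_mem_replicate hb).symm ▸ X_mul_X_add_one_mem
  rw [List.prod_replicate, mul_pow] at hfac
  exact ⟨hfac, fun b hb ↦ (List.eq_of_mem_replicate hb).symm ▸ hatom⟩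

lemma isTauAtomicFactorization_pair {j k : ℕ} (hj : j ≠ 0) (hk : k ≠ 0) :
    IsTauAtomicFactorization 𝕀 (X ^ (j + 1) * (X + 1) ^ (k + 1))
      [X * (X + 1) ^ k, X ^ j * (X + 1)] := by
  have hprod : (X ^ (j + 1) * (X + 1) ^ (k + 1) : ℤ[X]) =
      [X * (X + 1) ^ k, X ^ j * (X + 1)].prod := by
    simp only [List.prod_cons, List.prod_nil]; ring
  refine ⟨hprod ▸ isTauFactorization_prod (List.cons_ne_nil _ _) ?_, ?_⟩ <;>
    simp only [List.mem_cons, List.not_mem_nil, or_false] <;> rintro b (rfl | rfl)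
  · exact Ideal.mem_of_dvd _ (mul_dvd_mul_left X (dvd_pow_self _ hk)) X_mul_X_add_one_mem
  · exact Ideal.mem_of_dvd _ (mul_dvd_mul_right (dvd_pow_self X hj) _) X_mul_X_add_one_mem
  · simpa using isTauAtom_X_pow_mul (k := k) one_ne_zero (Or.inl rfl)
  · simpa using isTauAtom_X_pow_mul hj (Or.inr rfl)

lemma two_le_length {i : ℕ} (hi : 2 ≤ i) {L : List ℤ[X]}
    (h : IsTauAtomicFactorization 𝕀 (X ^ i * (X + 1) ^ i) L) : 2 ≤ L.length := by
  have := h.1.one_le_length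
  by_contra! hL
  obtain ⟨m, rfl⟩ := Nat.exists_eq_add_of_le' hi
  have := h.length_eq_one_of_length_eq_one (by omega)
    (isTauAtomicFactorization_pair (j := m + 1) (k := m + 1) m.succ_ne_zero m.succ_ne_zero).1
  simp at this

lemma tauElasticity_X_pow_mul {i : ℕ} (hi : 2 ≤ i) :
    tauElasticity 𝕀 (X ^ i * (X + 1) ^ i) = (i : ℝ≥0∞) / 2 := by
  obtain ⟨m, rfl⟩ := Nat.exists_eq_add_of_le' hi
  refine le_antisymm (sSup_le ?_) (le_sSup ⟨_, _, isTauAtomicFactorization_replicate (by omega),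
    isTauAtomicFactorization_pair (j := m + 1) (k := m + 1) m.succ_ne_zero m.succ_ne_zero,
    by simp⟩)
  rintro r ⟨L₁, L₂, h₁, h₂, rfl⟩
  exact ENNReal.div_le_div (by exact_mod_cast length_le_left (by omega) h₁.1)
    (by exact_mod_cast two_le_length hi h₂)

end TauIntPoly

/-- In `ℤ[x]` with `I = (2, x²+x)`, the `τ_I`-elasticity of `aᵢ = x^i(x+1)^i` is `i/2`
for every `i ≥ 2`; consequently the `τ_I`-elasticity of `ℤ[x]` is infinite. -/
theorem stmt_16 :
    (∀ i : ℕ, 2 ≤ i →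
      tauElasticity (Ideal.span ({2, X ^ 2 + X} : Set ℤ[X])) (X ^ i * (X + 1) ^ i) =
        (i : ℝ≥0∞) / 2) ∧
    tauRingElasticity (Ideal.span ({2, X ^ 2 + X} : Set ℤ[X])) = ⊤ := by
  refine ⟨fun i hi ↦ TauIntPoly.tauElasticity_X_pow_mul hi, ?_⟩
  rw [eq_top_iff, ← ENNReal.iSup_natCast]
  refine iSup_le fun n ↦ ?_
  have hn : (n : ℝ≥0∞) ≤ ((2 * n + 2 : ℕ) : ℝ≥0∞) / 2 := by
    rw [ENNReal.le_div_iff_mul_le (by simp) (by simp)]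
    norm_cast
    omega
  rw [← TauIntPoly.tauElasticity_X_pow_mul (by omega)] at hn
  exact hn.trans (le_iSup₂_of_le (f := fun a _ ↦ tauElasticity _ a) _
    ⟨_, TauIntPoly.isTauAtomicFactorization_replicate (by omega)⟩ le_rfl)
end

section
/- Let R be a UFD and I an ideal with R/I ≅ ℤ[x]/(2, x²+x) via f. If an element a ∈ R is congruent to f⁻¹(x) modulo I and all its prime factors are congruent to f⁻¹(1) or f⁻¹(x) modulo I, with exactly l prime factors congruent to f⁻¹(x), then every τ_I-factorization of a into τ_I-atoms has length exactly l. -/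
/-!
Work modulo `I`, where every unit is `≡ 1` and `a` lies in the class `e = f⁻¹(x)`, a nontrivial
idempotent. Every prime factor of `a` lies in the class `1` or `e`, so a divisor `b` of `a` lies
in the class `e ^ N(b)`, where `N(b)` counts the prime factors of `b` in the class `e`. The
factors of a `τ_I`-factorization of `a` share a class `c` with `c ^ k = e`, hence `c = e`; an atom
`b` in the class `e` has `N(b) = 1`, since otherwise `b = y q` with `q` prime and `y` both in the
class `e`. Counting prime factors in the class `e` gives `k = N(a) = l`. The facts about
`ℤ[x]/(2, x² + x)` follow from its embedding `p ↦ (p(0), p(1))` into `𝔽₂ × 𝔽₂`.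
-/

open Polynomial
open scoped ENNReal

variable {R : Type*} [CommRing R]

section TauFactorization

variable {I : Ideal R}

theorem IsTauAtom.ne_mul_of_mk_eq {b y z : R} (hb : IsTauAtom I b)
    (hyz : Ideal.Quotient.mk I y = Ideal.Quotient.mk I z) : b ≠ y * z := fun hbyz => by
  have hfac : IsTauFactorization I b [y, z] :=
    ⟨List.cons_ne_nil _ _, ⟨1, isUnit_one, by simp [hbyz]⟩, by simp [hyz]⟩
  simpa using hb.2.2 _ hfac

theorem IsTauFactorization.mk_eq_pow_length
    (hunit : ∀ u : R, IsUnit u → Ideal.Quotient.mk I u = 1) {a : R} {L : List R}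
    (hL : IsTauFactorization I a L) {b : R} (hb : b ∈ L) :
    Ideal.Quotient.mk I a = Ideal.Quotient.mk I b ^ L.length := by
  obtain ⟨-, ⟨u, hu, rfl⟩, hcong⟩ := hL
  rw [map_mul, hunit u hu, one_mul, map_list_prod, List.prod_eq_pow_card _ _ fun x hx => ?_,
    List.length_map]
  obtain ⟨c, hc, rfl⟩ := List.mem_map.mp hx
  exact hcong c hc b hb

theorem Ideal.Quotient.mk_eq_of_associated
    (hunit : ∀ u : R, IsUnit u → Ideal.Quotient.mk I u = 1) {x y : R} (h : Associated x y) :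
    Ideal.Quotient.mk I x = Ideal.Quotient.mk I y := by
  obtain ⟨u, rfl⟩ := h
  rw [map_mul, hunit _ u.isUnit, mul_one]

end TauFactorization

open UniqueFactorizationMonoid

section CountFactorsInClass

variable [UniqueFactorizationMonoid R] {I : Ideal R} {e : R ⧸ I}

open Classical in
noncomputable def countFactorsInClass (I : Ideal R) (e : R ⧸ I) (x : R) : ℕ :=
  ((factors x).map (Ideal.Quotient.mk I)).count e

theorem countFactorsInClass_mul (hunit : ∀ u : R, IsUnit u → Ideal.Quotient.mk I u = 1)
    {x y : R} (hx : x ≠ 0) (hy : y ≠ 0) :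
    countFactorsInClass I e (x * y) = countFactorsInClass I e x + countFactorsInClass I e y := by
  have hmap : (factors (x * y)).map (Ideal.Quotient.mk I) =
      (factors x + factors y).map (Ideal.Quotient.mk I) :=
    Multiset.rel_eq.mp <| Multiset.rel_map.mpr <| (factors_mul hx hy).mono
      fun _ _ _ _ h => Ideal.Quotient.mk_eq_of_associated hunit h
  simp only [countFactorsInClass, hmap, Multiset.map_add, Multiset.count_add]

theorem countFactorsInClass_of_isUnit {x : R} (hx : IsUnit x) : countFactorsInClass I e x = 0 := by
  simp [countFactorsInClass, factors_of_isUnit hx]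

open Classical in
theorem countFactorsInClass_of_prime (hunit : ∀ u : R, IsUnit u → Ideal.Quotient.mk I u = 1)
    {p : R} (hp : Prime p) :
    countFactorsInClass I e p = if e = Ideal.Quotient.mk I p then 1 else 0 := by
  obtain ⟨q, hpq, hfac⟩ := factors_eq_singleton_of_irreducible hp.irreducible
  simp only [countFactorsInClass, hfac, Multiset.map_singleton, Multiset.count_singleton,
    Ideal.Quotient.mk_eq_of_associated hunit hpq]

theorem countFactorsInClass_listProd (hunit : ∀ u : R, IsUnit u → Ideal.Quotient.mk I u = 1)
    {L : List R} (hL : L.prod ≠ 0) :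
    countFactorsInClass I e L.prod = (L.map (countFactorsInClass I e)).sum := by
  induction L with
  | nil => exact countFactorsInClass_of_isUnit isUnit_one
  | cons b L ih =>
    rw [List.prod_cons] at hL ⊢
    rw [countFactorsInClass_mul hunit (left_ne_zero_of_mul hL) (right_ne_zero_of_mul hL),
      ih (right_ne_zero_of_mul hL), List.map_cons, List.sum_cons]

theorem mk_eq_pow_countFactorsInClass (hunit : ∀ u : R, IsUnit u → Ideal.Quotient.mk I u = 1)
    {a : R} (hprimes : ∀ p, Prime p → p ∣ a →
      Ideal.Quotient.mk I p = 1 ∨ Ideal.Quotient.mk I p = e)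
    {b : R} (hb : b ≠ 0) (hba : b ∣ a) :
    Ideal.Quotient.mk I b = e ^ countFactorsInClass I e b := by
  classical
  rw [← Ideal.Quotient.mk_eq_of_associated hunit (factors_prod hb), map_multiset_prod,
    countFactorsInClass]
  refine Multiset.prod_eq_pow_single e fun c hce hc => ?_
  obtain ⟨p, hp, rfl⟩ := Multiset.mem_map.mp hc
  exact (hprimes p (prime_of_factor p hp) ((dvd_of_mem_factors hp).trans hba)).resolve_right hce

theorem IsTauAtom.countFactorsInClass_eq_one
    (hunit : ∀ u : R, IsUnit u → Ideal.Quotient.mk I u = 1)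
    (he : IsIdempotentElem e) (he1 : e ≠ 1) {a : R}
    (hprimes : ∀ p, Prime p → p ∣ a → Ideal.Quotient.mk I p = 1 ∨ Ideal.Quotient.mk I p = e)
    {b : R} (hb : IsTauAtom I b) (hba : b ∣ a) (hbe : Ideal.Quotient.mk I b = e) :
    countFactorsInClass I e b = 1 := by
  classical
  have hpos : countFactorsInClass I e b ≠ 0 := fun h => he1 <| by
    rw [← hbe, mk_eq_pow_countFactorsInClass hunit hprimes hb.1 hba, h, pow_zero]
  obtain ⟨q, hq, hqe⟩ : ∃ q ∈ factors b, Ideal.Quotient.mk I q = e :=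
    Multiset.mem_map.mp (Multiset.count_ne_zero.mp hpos)
  have hqprime : Prime q := prime_of_factor q hq
  obtain ⟨y, rfl⟩ := dvd_of_mem_factors hq
  have hy : y ≠ 0 := right_ne_zero_of_mul hb.1
  rw [countFactorsInClass_mul hunit hqprime.ne_zero hy, countFactorsInClass_of_prime hunit hqprime,
    if_pos hqe.symm]
  by_contra hy1
  have hye : Ideal.Quotient.mk I y = e := by
    rw [mk_eq_pow_countFactorsInClass hunit hprimes hy ((dvd_mul_left y q).trans hba),
      he.pow_eq (by omega)]
  exact hb.ne_mul_of_mk_eq (hqe.trans hye.symm) rfl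
theorem countFactorsInClass_listProd_mul_listProd [IsDomain R]
    (hunit : ∀ u : R, IsUnit u → Ideal.Quotient.mk I u = 1) (he1 : e ≠ 1) {P Q : List R}
    (hP : ∀ p ∈ P, Prime p ∧ Ideal.Quotient.mk I p = 1)
    (hQ : ∀ q ∈ Q, Prime q ∧ Ideal.Quotient.mk I q = e) :
    countFactorsInClass I e (P.prod * Q.prod) = Q.length := by
  have hP0 : P.prod ≠ 0 := List.prod_ne_zero fun h0 => (hP 0 h0).1.ne_zero rfl
  have hQ0 : Q.prod ≠ 0 := List.prod_ne_zero fun h0 => (hQ 0 h0).1.ne_zero rfl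
  have hPcount : P.map (countFactorsInClass I e) = P.map fun _ => 0 :=
    List.map_congr_left fun p hp => by
      rw [countFactorsInClass_of_prime hunit (hP p hp).1, (hP p hp).2, if_neg he1]
  have hQcount : Q.map (countFactorsInClass I e) = Q.map fun _ => 1 :=
    List.map_congr_left fun q hq => by
      rw [countFactorsInClass_of_prime hunit (hQ q hq).1, (hQ q hq).2, if_pos rfl]
  rw [countFactorsInClass_mul hunit hP0 hQ0, countFactorsInClass_listProd hunit hP0,
    countFactorsInClass_listProd hunit hQ0, hPcount, hQcount]
  simp

theorem IsTauAtomicFactorization.length_eq_countFactorsInClass [IsDomain R]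
    (hunit : ∀ u : R, IsUnit u → Ideal.Quotient.mk I u = 1)
    (he : IsIdempotentElem e) (he1 : e ≠ 1) {a : R}
    (hprimes : ∀ p, Prime p → p ∣ a → Ideal.Quotient.mk I p = 1 ∨ Ideal.Quotient.mk I p = e)
    (hae : Ideal.Quotient.mk I a = e) {L : List R} (hL : IsTauAtomicFactorization I a L) :
    L.length = countFactorsInClass I e a := by
  obtain ⟨hne, ⟨u, hu, hauL⟩, hcong⟩ := hL.1
  have hatoms := hL.2
  have hdvd : ∀ b ∈ L, b ∣ a := fun b hb => hauL ▸ (List.dvd_prod hb).trans (dvd_mul_left _ _)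
  have hclass : ∀ b ∈ L, Ideal.Quotient.mk I b = e := by
    obtain ⟨b₀, hb₀⟩ := List.exists_mem_of_ne_nil L hne
    have hpow := mk_eq_pow_countFactorsInClass hunit hprimes (hatoms b₀ hb₀).1 (hdvd b₀ hb₀)
    have hb₀e : Ideal.Quotient.mk I b₀ = e := by
      refine hpow.trans (he.pow_eq fun h0 => he1 ?_)
      rw [← hae, hL.1.mk_eq_pow_length hunit hb₀, hpow, h0, pow_zero, one_pow]
    exact fun b hb => (hcong b hb b₀ hb₀).trans hb₀e
  have hprod : L.prod ≠ 0 := List.prod_ne_zero fun h0 => (hatoms 0 h0).1 rfl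
  calc L.length = (L.map (countFactorsInClass I e)).sum := by
        rw [List.map_congr_left fun b hb => (hatoms b hb).countFactorsInClass_eq_one hunit he he1
          hprimes (hdvd b hb) (hclass b hb)]
        simp
    _ = countFactorsInClass I e a := by
        rw [hauL, countFactorsInClass_mul hunit hu.ne_zero hprod, countFactorsInClass_of_isUnit hu,
          zero_add, countFactorsInClass_listProd hunit hprod]

end CountFactorsInClass

section QuotientTwoXSqAddX

local notation "J₂" => Ideal.span ({2, X ^ 2 + X} : Set ℤ[X])

noncomputable def evalZeroOneModTwo : ℤ[X] →+* ZMod 2 × ZMod 2 :=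
  (eval₂RingHom (Int.castRingHom _) 0).prod (eval₂RingHom (Int.castRingHom _) 1)

lemma evalZeroOneModTwo_apply (p : ℤ[X]) :
    evalZeroOneModTwo p = (((p.eval 0 : ℤ) : ZMod 2), ((p.eval 1 : ℤ) : ZMod 2)) := by
  simp [evalZeroOneModTwo, eval₂_at_zero, eval₂_at_one, coeff_zero_eq_eval_zero]

lemma evalZeroOneModTwo_X : evalZeroOneModTwo X = (0, 1) := by
  simp [evalZeroOneModTwo_apply]

lemma span_two_X_sq_add_X_le_ker : J₂ ≤ RingHom.ker evalZeroOneModTwo := by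
  refine Ideal.span_le.mpr (Set.insert_subset_iff.mpr ⟨?_, Set.singleton_subset_iff.mpr ?_⟩)
  · rw [SetLike.mem_coe, RingHom.mem_ker, map_ofNat]; decide
  · rw [SetLike.mem_coe, RingHom.mem_ker, map_add, map_pow, evalZeroOneModTwo_X]; decide

lemma mem_span_two_X_sq_add_X_of_eval {p : ℤ[X]} (hp : evalZeroOneModTwo p = 0) : p ∈ J₂ := by
  have hmonic : (X ^ 2 + X : ℤ[X]).Monic := monic_X_pow_add (by rw [degree_X]; decide)
  set r := p %ₘ (X ^ 2 + X)
  have hr : r = C (r.coeff 1) * X + C (r.coeff 0) := by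
    refine eq_X_add_C_of_degree_le_one (Order.le_of_lt_succ ?_)
    have := degree_modByMonic_lt p hmonic
    rwa [show (X ^ 2 + X : ℤ[X]).degree = 2 by compute_degree!] at this
  have hp_sub : p - r ∈ J₂ := by
    rw [show p - r = (X ^ 2 + X) * (p /ₘ (X ^ 2 + X)) by
      linear_combination -(modByMonic_add_div p (X ^ 2 + X))]
    exact Ideal.mul_mem_right _ _ (Ideal.subset_span (by simp))
  have hr0 : evalZeroOneModTwo r = 0 := by
    rw [show r = p - (p - r) by ring, map_sub, hp, span_two_X_sq_add_X_le_ker hp_sub, sub_zero]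
  rw [hr, evalZeroOneModTwo_apply] at hr0
  simp only [eq_intCast, eval_add, eval_mul, eval_intCast, Int.cast_eq, eval_X, mul_zero, zero_add,
    mul_one, Int.cast_add, Prod.mk_eq_zero] at hr0
  obtain ⟨h0, h1⟩ := hr0
  rw [h0, add_zero] at h1
  obtain ⟨k₀, hk₀⟩ := (ZMod.intCast_zmod_eq_zero_iff_dvd _ 2).mp h0
  obtain ⟨k₁, hk₁⟩ := (ZMod.intCast_zmod_eq_zero_iff_dvd _ 2).mp h1
  rw [Nat.cast_ofNat] at hk₀ hk₁
  have hr_mem : r ∈ J₂ := by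
    rw [hr, hk₀, hk₁, show C (2 * k₁) * X + C (2 * k₀) = 2 * (C k₁ * X + C k₀) by simp; ring]
    exact Ideal.mul_mem_right _ _ (Ideal.subset_span (by simp))
  simpa using Ideal.add_mem _ hp_sub hr_mem

noncomputable def quotEvalZeroOneModTwo : ℤ[X] ⧸ J₂ →+* ZMod 2 × ZMod 2 :=
  Ideal.Quotient.lift J₂ evalZeroOneModTwo fun _ hp => span_two_X_sq_add_X_le_ker hp

lemma quotEvalZeroOneModTwo_mk (p : ℤ[X]) :
    quotEvalZeroOneModTwo (Ideal.Quotient.mk J₂ p) = evalZeroOneModTwo p :=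
  Ideal.Quotient.lift_mk _ _ _

lemma quotEvalZeroOneModTwo_injective : Function.Injective quotEvalZeroOneModTwo := by
  refine (injective_iff_map_eq_zero _).mpr fun s hs => ?_
  obtain ⟨p, rfl⟩ := Ideal.Quotient.mk_surjective s
  rw [quotEvalZeroOneModTwo_mk] at hs
  exact Ideal.Quotient.eq_zero_iff_mem.mpr (mem_span_two_X_sq_add_X_of_eval hs)

lemma quotEvalZeroOneModTwo_mk_X : quotEvalZeroOneModTwo (Ideal.Quotient.mk J₂ X) = (0, 1) := by
  rw [quotEvalZeroOneModTwo_mk, evalZeroOneModTwo_X]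

lemma eq_one_of_isUnit_quot {s : ℤ[X] ⧸ J₂} (hs : IsUnit s) : s = 1 := by
  have hunit : ∀ y : ZMod 2 × ZMod 2, IsUnit y → y = 1 := by decide
  exact quotEvalZeroOneModTwo_injective <| by
    rw [hunit _ (hs.map quotEvalZeroOneModTwo), map_one]

lemma isIdempotentElem_mk_X : IsIdempotentElem (Ideal.Quotient.mk J₂ X) :=
  quotEvalZeroOneModTwo_injective <| by
    rw [map_mul, quotEvalZeroOneModTwo_mk_X]; decide

lemma mk_X_ne_one : Ideal.Quotient.mk J₂ X ≠ 1 := fun h => by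
  have := congrArg quotEvalZeroOneModTwo h
  rw [quotEvalZeroOneModTwo_mk_X, map_one] at this
  exact absurd this (by decide)

end QuotientTwoXSqAddX

/-- UFD `R`, `R/I ≅ ℤ[x]/(2, x²+x)` via `f`.  If `a ≡ f⁻¹(x) (mod I)` and all prime
factors of `a` are congruent to `f⁻¹(1)` or `f⁻¹(x)`, with exactly `l` of them
congruent to `f⁻¹(x)`, then every atomic `τ_I`-factorization of `a` has length `l`. -/
theorem stmt_18 {R : Type*} [CommRing R] [IsDomain R] [UniqueFactorizationMonoid R]
    (I : Ideal R)
    (f : (R ⧸ I) ≃+* (ℤ[X] ⧸ Ideal.span ({2, X ^ 2 + X} : Set ℤ[X])))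
    (a : R)
    (haI : f (Ideal.Quotient.mk I a) =
      Ideal.Quotient.mk (Ideal.span ({2, X ^ 2 + X} : Set ℤ[X])) X)
    (P Q : List R)
    (hP : ∀ p ∈ P, Prime p ∧ f (Ideal.Quotient.mk I p) = 1)
    (hQ : ∀ q ∈ Q, Prime q ∧ f (Ideal.Quotient.mk I q) =
      Ideal.Quotient.mk (Ideal.span ({2, X ^ 2 + X} : Set ℤ[X])) X)
    (ha : a = P.prod * Q.prod) :
    ∀ L : List R, IsTauAtomicFactorization I a L → L.length = Q.length := by
  set e : R ⧸ I := f.symm (Ideal.Quotient.mk _ X) with he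
  have hunit : ∀ u : R, IsUnit u → Ideal.Quotient.mk I u = 1 := fun u hu =>
    f.injective <| by rw [eq_one_of_isUnit_quot ((hu.map _).map f), map_one]
  have hP' : ∀ p ∈ P, Prime p ∧ Ideal.Quotient.mk I p = 1 := fun p hp =>
    ⟨(hP p hp).1, f.injective <| by rw [(hP p hp).2, map_one]⟩
  have hQ' : ∀ q ∈ Q, Prime q ∧ Ideal.Quotient.mk I q = e := fun q hq =>
    ⟨(hQ q hq).1, f.injective <| by rw [(hQ q hq).2, he, f.apply_symm_apply]⟩
  have hprimes : ∀ p, Prime p → p ∣ a →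
      Ideal.Quotient.mk I p = 1 ∨ Ideal.Quotient.mk I p = e := by
    intro p hp hpa
    rw [ha, ← List.prod_append] at hpa
    obtain ⟨r, hr, hpr⟩ := hp.dvd_prod_iff.mp hpa
    have hr' : Prime r := (List.mem_append.mp hr).elim (hP' r · |>.1) (hQ' r · |>.1)
    rw [Ideal.Quotient.mk_eq_of_associated hunit (hp.associated_of_dvd hr' hpr)]
    exact (List.mem_append.mp hr).imp (hP' r · |>.2) (hQ' r · |>.2)
  have he1 : e ≠ 1 := by simpa [he] using mk_X_ne_one
  have hae : Ideal.Quotient.mk I a = e := f.injective <| by rw [haI, he, f.apply_symm_apply]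
  intro L hL
  rw [hL.length_eq_countFactorsInClass hunit (isIdempotentElem_mk_X.map f.symm) he1 hprimes hae,
    ha, countFactorsInClass_listProd_mul_listProd hunit he1 hP' hQ']
end
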